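/- arXiv:1505.04806 — 3 statements merged into one kernel-verified Lean document; each statement's English description precedes it below -/
import Mathlib

section
/- Let G = (V,E) be a finite simple strongly connected directed graph. Then det(L) divides det(ℒ) in the polynomial ring ℂ[x_e (e ∈ E), y_v (v ∈ V)], where L is the Schrödinger operator of G and ℒ the lifted Schrödinger operator of the tree graph 𝒯G. -/
open Classical Finset

noncomputable section

variable {V : Type*} {R : Type*} [CommRing R]

/-- An oriented spanning tree of the digraph `E` on `V`: `root` has outdegree 0
(convention `out root = root`), every other vertex `v` has a unique outgoing edge
`(v, out v)` which is an edge of the graph, and iterating `out` from any vertex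
reaches the root (no cycles). -/
structure SpTree [Fintype V] (E : V → V → Prop) where
  root : V
  out : V → V
  out_root : out root = root
  edge_mem : ∀ v, v ≠ root → E v (out v)
  reach : ∀ v, ∃ n, out^[n] v = root

theorem SpTree.ext' [Fintype V] {E : V → V → Prop} {a b : SpTree E}
    (h1 : a.root = b.root) (h2 : a.out = b.out) : a = b := by
  cases a; cases b; dsimp at h1 h2; subst h1; subst h2; rfl

noncomputable instance [Fintype V] (E : V → V → Prop) : Fintype (SpTree E) :=
  Fintype.ofInjective (fun a => (a.root, a.out)) fun a b h =>
    SpTree.ext' (congrArg Prod.fst h) (congrArg Prod.snd h)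

/-- An oriented forest of the digraph `E`, rooted in the set `U`. -/
structure SpForest [Fintype V] (E : V → V → Prop) (U : Finset V) where
  out : V → V
  out_root : ∀ v ∈ U, out v = v
  edge_mem : ∀ v, v ∉ U → E v (out v)
  reach : ∀ v, ∃ n, out^[n] v ∈ U

theorem SpForest.ext' [Fintype V] {E : V → V → Prop} {U : Finset V} {a b : SpForest E U}
    (h : a.out = b.out) : a = b := by
  cases a; cases b; dsimp at h; subst h; rfl

noncomputable instance [Fintype V] (E : V → V → Prop) (U : Finset V) :
    Fintype (SpForest E U) :=
  Fintype.ofInjective SpForest.out fun _ _ h => SpForest.ext' h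

/-- The adjacency relation of the tree graph `𝒯G`: there is an edge from `a` to `b`
if `b` is obtained from `a` by adding the edge `(a.root, b.root)` of `G` and deleting
the edge of `a` going out of `b.root`. -/
def TStep [Fintype V] (E : V → V → Prop) (a b : SpTree E) : Prop :=
  E a.root b.root ∧ a.root ≠ b.root ∧ b.out a.root = b.root ∧
    ∀ v, v ≠ a.root → v ≠ b.root → b.out v = a.out v

/-- The set `W` is strongly connected in the digraph `E` (for the induced subgraph). -/
def SConn (E : V → V → Prop) (W : Set V) : Prop :=
  ∀ u ∈ W, ∀ v ∈ W, Relation.ReflTransGen (fun a b => E a b ∧ a ∈ W ∧ b ∈ W) u v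

/-- Edge-weighted Laplacian matrix of the digraph `E`, with weight `x (v,w)` on the
edge from `v` to `w`. -/
def lapM [Fintype V] (E : V → V → Prop) (x : V × V → R) : Matrix V V R :=
  Matrix.of fun v w =>
    if v = w then -(∑ u ∈ univ.filter (fun u => E v u), x (v, u))
    else if E v w then x (v, w) else 0

/-- Schrödinger operator `L = Q + Y` with potential `y`. -/
def schrM [Fintype V] (E : V → V → Prop) (x : V × V → R) (y : V → R) : Matrix V V R :=
  lapM E x + Matrix.diagonal y

/-- Weighted adjacency matrix. -/
def adjM [Fintype V] (E : V → V → Prop) (x : V × V → R) : Matrix V V R :=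
  Matrix.of fun v w => if E v w then x (v, w) else 0

/-- Submatrix keeping rows and columns indexed by `W`. -/
def subM [Fintype V] (M : Matrix V V R) (W : Finset V) :
    Matrix {v // v ∈ W} {v // v ∈ W} R :=
  M.submatrix Subtype.val Subtype.val

/-- The lifted edge weights on the tree graph: the edge from `a` to `b` in `𝒯G`
carries the weight of the edge of `G` from `a.root` to `b.root`. -/
def xT [Fintype V] (E : V → V → Prop) (x : V × V → R) : SpTree E × SpTree E → R :=
  fun p => x (p.1.root, p.2.root)

/-- The lifted potential on the tree graph. -/
def yT [Fintype V] (E : V → V → Prop) (y : V → R) : SpTree E → R :=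
  fun a => y a.root

/-- Weight `π_𝐚` of a spanning tree: product of its edge weights. -/
def treeWt [Fintype V] {E : V → V → Prop} (x : V × V → R) (a : SpTree E) : R :=
  ∏ v ∈ univ.filter (fun v => v ≠ a.root), x (v, a.out v)

/-- Generating polynomial of the oriented spanning trees of `E`. -/
def FGpoly [Fintype V] (E : V → V → Prop) (x : V × V → R) : R :=
  ∑ a : SpTree E, treeWt x a

/-- Weight `π_𝐟` of a forest: product of its edge weights. -/
def forestWt [Fintype V] {E : V → V → Prop} {U : Finset V} (x : V × V → R)
    (f : SpForest E U) : R :=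
  ∏ v ∈ univ.filter (fun v => v ∉ U), x (v, f.out v)

/-- Generating polynomial `Ψ_U` of the oriented forests of `E` rooted in `U`. -/
def PsiF [Fintype V] (E : V → V → Prop) (U : Finset V) (x : V × V → R) : R :=
  ∑ f : SpForest E U, forestWt x f

/-- Generating polynomial of the oriented spanning trees of the tree graph `𝒯G`. -/
def FTGpoly [Fintype V] (E : V → V → Prop) (x : V × V → R) : R :=
  FGpoly (TStep E) (xT E x)

/-- The polynomial ring `ℂ[x_e (e ∈ V × V), y_v (v ∈ V)]`. -/
abbrev Rng (V : Type*) := MvPolynomial ((V × V) ⊕ V) ℂ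

/-- The edge variable `x_e`. -/
def xv {V : Type*} : V × V → Rng V := fun e => MvPolynomial.X (Sum.inl e)

/-- The vertex variable `y_v`. -/
def yv {V : Type*} : V → Rng V := fun v => MvPolynomial.X (Sum.inr v)

/-! ### The exploration algorithm -/

/-- The state of the exploration algorithm: a set `A` of explored vertices, a FIFO
list `Lq` of edges to be examined, a reservoir `F` of edges, and the set `Er` of
erased vertices. -/
structure ExpState (V : Type*) where
  A : Finset V
  Lq : List (V × V)
  F : Finset (V × V)
  Er : Finset V

/-- The list of the edges of `S` with target `w`, ordered by increasing source. -/
def sortedTo (ord : LinearOrder V) (S : Finset (V × V)) (w : V) : List (V × V) :=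
  letI := ord
  (((S.filter (fun f => f.2 = w)).image Prod.fst).sort (· ≤ ·)).map fun u => (u, w)

/-- The edge `e` belongs to the tree `a`. -/
def inTree [Fintype V] {E : V → V → Prop} (a : SpTree E) (e : V × V) : Prop :=
  e.1 ≠ a.root ∧ a.out e.1 = e.2

/-- One iteration of the exploration algorithm: pick the first edge `e` of the list,
with source `w`; if `e` belongs to the tree then add `w` to `A`, delete all edges with
source `w` from the list, and append the edges of `F` with target `w` by increasing
source; otherwise erase `w`, deleting all edges with source or target `w` from the
list and from `F`. -/
def expStep [Fintype V] {E : V → V → Prop} (ord : LinearOrder V) (a : SpTree E)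
    (s : ExpState V) : ExpState V :=
  match s.Lq with
  | [] => s
  | e :: rest =>
    if inTree a e then
      { A := insert e.1 s.A
        Lq := rest.filter (fun f => decide (f.1 ≠ e.1)) ++ sortedTo ord s.F e.1
        F := s.F
        Er := s.Er }
    else
      { A := s.A
        Lq := rest.filter (fun f => decide (f.1 ≠ e.1 ∧ f.2 ≠ e.1))
        F := s.F.filter (fun f => f.1 ≠ e.1 ∧ f.2 ≠ e.1)
        Er := insert e.1 s.Er }

/-- The initial state of the exploration algorithm run on a tree rooted at `v`:
`A = {v}`, the list consists of the edges with target `v` by increasing source, and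
`F` is the set of edges with source `≠ v`. -/
def expInit [Fintype V] {E : V → V → Prop} (ord : LinearOrder V) (a : SpTree E) :
    ExpState V :=
  letI := ord
  { A := {a.root}
    Lq := ((univ.filter (fun u => E u a.root)).sort (· ≤ ·)).map fun u => (u, a.root)
    F := univ.filter fun f : V × V => E f.1 f.2 ∧ f.1 ≠ a.root
    Er := (∅ : Finset V) }

/-- The final state of the exploration algorithm (the number of iterations below is
large enough for the list to be exhausted, after which the state no longer moves). -/
def expRun [Fintype V] {E : V → V → Prop} (ord : LinearOrder V) (a : SpTree E) :
    ExpState V :=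
  (expStep ord a)^[2 * Fintype.card (V × V) + 1] (expInit ord a)

/-- The set `φ(𝐚)` of explored vertices. -/
def expPhi [Fintype V] {E : V → V → Prop} (ord : LinearOrder V) (a : SpTree E) : Finset V :=
  (expRun ord a).A

/-- The set of erased vertices. -/
def expEr [Fintype V] {E : V → V → Prop} (ord : LinearOrder V) (a : SpTree E) : Finset V :=
  (expRun ord a).Er

/-- The set `ψ(𝐚)`: the strongly connected component of the root in the subgraph
induced on `φ(𝐚)`. -/
def expPsi [Fintype V] {E : V → V → Prop} (ord : LinearOrder V) (a : SpTree E) : Finset V :=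
  univ.filter fun u => u ∈ expPhi ord a ∧
    Relation.ReflTransGen
      (fun p q => E p q ∧ p ∈ expPhi ord a ∧ q ∈ expPhi ord a) a.root u ∧
    Relation.ReflTransGen
      (fun p q => E p q ∧ p ∈ expPhi ord a ∧ q ∈ expPhi ord a) u a.root

/-- The multiplicity `m(W, w)`: the number of oriented spanning trees `𝐚` rooted at
`w` with `ψ(𝐚) = W`. -/
def multCount [Fintype V] (E : V → V → Prop) (ord : LinearOrder V) (W : Finset V)
    (w : V) : ℕ :=
  Nat.card {a : SpTree E // a.root = w ∧ expPsi ord a = W}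

/-- The multiplicity `m(W)` (the common value of the `m(W, w)`, `w ∈ W`). -/
def multW [Fintype V] (E : V → V → Prop) (ord : LinearOrder V) (W : Finset V) : ℕ :=
  letI := ord
  if h : W.Nonempty then multCount E ord W (W.min' h) else 0

end

/-! ### Auxiliary development for statement11 -/

section Statement11Aux

open Classical Finset

variable {V : Type} [Fintype V]

/-- `n`-step reachability in the digraph `E`. -/
def nreach (E : V → V → Prop) : ℕ → V → V → Prop
  | 0, u, v => u = v
  | n+1, u, v => ∃ w, E u w ∧ nreach E n w v

theorem nreach_of_rtg {E : V → V → Prop} {W : Set V} {u v : V}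
    (h : Relation.ReflTransGen (fun a b => E a b ∧ a ∈ W ∧ b ∈ W) u v) :
    ∃ n, nreach E n u v := by
  induction h using Relation.ReflTransGen.head_induction_on with
  | refl => exact ⟨0, rfl⟩
  | head hab _ ih =>
    obtain ⟨n, hn⟩ := ih
    exact ⟨n+1, _, hab.1, hn⟩

variable {E : V → V → Prop}

theorem exists_step {v : V} (hreach : ∀ u, ∃ n, nreach E n u v) (u : V) (hu : u ≠ v) :
    ∃ w, E u w ∧ Nat.find (hreach w) < Nat.find (hreach u) := by
  have hspec := Nat.find_spec (hreach u)
  cases hdu : Nat.find (hreach u) with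
  | zero =>
    rw [hdu] at hspec
    exact absurd hspec hu
  | succ m =>
    rw [hdu] at hspec
    obtain ⟨w, hw, hnw⟩ := hspec
    exact ⟨w, hw, lt_of_le_of_lt (Nat.find_min' (hreach w) hnw) (by omega)⟩

theorem reach_aux {out : V → V} {v : V} (d : V → ℕ)
    (hd : ∀ u, u ≠ v → d (out u) < d u) : ∀ u, ∃ n, out^[n] u = v := by
  intro u
  generalize hk : d u = k
  induction k using Nat.strong_induction_on generalizing u with
  | _ k ih =>
    by_cases h : u = v
    · exact ⟨0, h⟩
    · obtain ⟨n, hn⟩ := ih (d (out u)) (hk ▸ hd u h) (out u) rfl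
      exact ⟨n+1, by rwa [Function.iterate_succ_apply]⟩

/-- A spanning tree rooted at `v`, from strong connectivity. -/
noncomputable def treeAt (hsc : SConn E Set.univ) (v : V) : SpTree E :=
  have hreach : ∀ u, ∃ n, nreach E n u v := fun u =>
    nreach_of_rtg (hsc u trivial v trivial)
  { root := v
    out := fun u => if hu : u = v then v else (exists_step hreach u hu).choose
    out_root := dif_pos rfl
    edge_mem := fun u hu => by
      show E u (if hu' : u = v then v else (exists_step hreach u hu').choose)
      rw [dif_neg hu]
      exact (exists_step hreach u hu).choose_spec.1
    reach := reach_aux (fun u => Nat.find (hreach u)) (fun u hu => by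
      show Nat.find _ < Nat.find _
      rw [dif_neg hu]
      exact (exists_step hreach u hu).choose_spec.2) }

theorem treeAt_root (hsc : SConn E Set.univ) (v : V) : (treeAt hsc v).root = v := rfl

theorem rotate_reach (a : SpTree E) {v : V} (o : V → V)
    (ho : ∀ w, w ≠ v → w ≠ a.root → o w = a.out w) (hor : o a.root = v) :
    ∀ m w, a.out^[m] w = a.root → ∃ n, o^[n] w = v := by
  intro m
  induction m with
  | zero =>
    intro w hw
    exact ⟨1, by rw [Function.iterate_one, show w = a.root from hw, hor]⟩
  | succ m ih =>
    intro w hw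
    by_cases h1 : w = v
    · exact ⟨0, h1⟩
    by_cases h2 : w = a.root
    · exact ⟨1, by rw [Function.iterate_one, h2, hor]⟩
    · rw [Function.iterate_succ_apply] at hw
      obtain ⟨n, hn⟩ := ih (a.out w) hw
      exact ⟨n+1, by rw [Function.iterate_succ_apply, ho w h1 h2]; exact hn⟩

/-- The tree obtained from `a` by adding the edge from `a.root` to `v` and deleting the
edge out of `v` (defined to be `a` itself when the edge is not admissible). -/
noncomputable def rotate (a : SpTree E) (v : V) : SpTree E :=
  if h : E a.root v ∧ a.root ≠ v then
    { root := v
      out := fun w => if w = v then v else if w = a.root then v else a.out w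
      out_root := if_pos rfl
      edge_mem := fun w hw => by
        show E w (if w = v then v else if w = a.root then v else a.out w)
        rw [if_neg hw]
        by_cases hwr : w = a.root
        · rw [if_pos hwr, hwr]; exact h.1
        · rw [if_neg hwr]; exact a.edge_mem w hwr
      reach := fun w => by
        obtain ⟨m, hm⟩ := a.reach w
        exact rotate_reach a (fun u => if u = v then v else if u = a.root then v else a.out u)
          (fun u h1 h2 => by
            show (if u = v then v else if u = a.root then v else a.out u) = a.out u
            rw [if_neg h1, if_neg h2])
          (by
            show (if a.root = v then v else if a.root = a.root then v else a.out a.root) = v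
            rw [if_neg h.2, if_pos rfl]) m w hm }
  else a

theorem rotate_root (a : SpTree E) {v : V} (h1 : E a.root v) (h2 : a.root ≠ v) :
    (rotate a v).root = v := by
  rw [rotate, dif_pos ⟨h1, h2⟩]

theorem rotate_out (a : SpTree E) {v : V} (h1 : E a.root v) (h2 : a.root ≠ v) :
    (rotate a v).out = fun w => if w = v then v else if w = a.root then v else a.out w := by
  rw [rotate, dif_pos ⟨h1, h2⟩]

theorem rotate_tstep (a : SpTree E) {v : V} (h1 : E a.root v) (h2 : a.root ≠ v) :
    TStep E a (rotate a v) := by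
  refine ⟨?_, ?_, ?_, ?_⟩
  · rw [rotate_root a h1 h2]; exact h1
  · rw [rotate_root a h1 h2]; exact h2
  · rw [rotate_root a h1 h2, rotate_out a h1 h2]
    show (if a.root = v then v else if a.root = a.root then v else a.out a.root) = v
    rw [if_neg h2, if_pos rfl]
  · intro w hw1 hw2
    rw [rotate_root a h1 h2] at hw2
    rw [rotate_out a h1 h2]
    show (if w = v then v else if w = a.root then v else a.out w) = a.out w
    rw [if_neg hw2, if_neg hw1]

theorem tstep_eq_rotate {a b : SpTree E} (h : TStep E a b) : b = rotate a b.root := by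
  obtain ⟨h1, h2, h3, h4⟩ := h
  refine (SpTree.ext' ?_ ?_).symm
  · exact rotate_root a h1 h2
  · rw [rotate_out a h1 h2]
    funext w
    by_cases hw1 : w = b.root
    · rw [if_pos hw1, hw1, b.out_root]
    by_cases hw2 : w = a.root
    · rw [if_neg hw1, if_pos hw2, hw2, h3]
    · rw [if_neg hw1, if_neg hw2, h4 w hw2 hw1]

end Statement11Aux

section Statement11Schr

open Classical Finset

variable {V : Type} [Fintype V] {E : V → V → Prop} {R : Type*} [CommRing R]

theorem sum_delta_mul {m : Type*} [Fintype m] [DecidableEq m]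
    (c : m) (f : m → R) : ∑ b, (if b = c then (1:R) else 0) * f b = f c := by
  simp [ite_mul]

theorem sum_delta_mul' {m : Type*} [Fintype m] [DecidableEq m]
    (c : m) (f : m → R) : ∑ b, (if c = b then (1:R) else 0) * f b = f c := by
  simp [ite_mul]

theorem sum_tstep (hsimple : ∀ v, ¬ E v v) (a : SpTree E) (x : V × V → R) :
    ∑ b ∈ univ.filter (fun b => TStep E a b), x (a.root, b.root)
      = ∑ u ∈ univ.filter (fun u => E a.root u), x (a.root, u) := by
  refine Finset.sum_nbij' (i := fun b => b.root) (j := fun u => rotate a u) ?_ ?_ ?_ ?_ ?_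
  · intro b hb
    simp only [Finset.mem_filter, Finset.mem_univ, true_and] at hb ⊢
    exact hb.1
  · intro u hu
    simp only [Finset.mem_filter, Finset.mem_univ, true_and] at hu ⊢
    exact rotate_tstep a hu (fun h => hsimple a.root (h ▸ hu))
  · intro b hb
    simp only [Finset.mem_filter, Finset.mem_univ, true_and] at hb
    exact (tstep_eq_rotate hb).symm
  · intro u hu
    simp only [Finset.mem_filter, Finset.mem_univ, true_and] at hu
    exact rotate_root a hu (fun h => hsimple a.root (h ▸ hu))
  · intro b _
    rfl

theorem lap_P (hsimple : ∀ v, ¬ E v v) (x : V × V → R) :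
    lapM (TStep E) (xT E x) * (Matrix.of fun (b : SpTree E) v => if b.root = v then (1:R) else 0)
      = (Matrix.of fun (b : SpTree E) v => if b.root = v then (1:R) else 0) * lapM E x := by
  ext a v
  rw [Matrix.mul_apply, Matrix.mul_apply]
  have hRHS : ∑ w, (Matrix.of fun (b : SpTree E) v => if b.root = v then (1:R) else 0) a w * lapM E x w v
      = lapM E x a.root v := by
    have h : ∀ w, (Matrix.of fun (b : SpTree E) v => if b.root = v then (1:R) else 0) a w * lapM E x w v
        = (if a.root = w then (1:R) else 0) * lapM E x w v := fun w => rfl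
    simp only [h]
    exact sum_delta_mul' a.root (fun w => lapM E x w v)
  rw [hRHS]
  have hlap : lapM E x a.root v
      = if a.root = v then -(∑ u ∈ univ.filter (fun u => E a.root u), x (a.root, u))
        else if E a.root v then x (a.root, v) else 0 := rfl
  have hterm : ∀ b : SpTree E, lapM (TStep E) (xT E x) a b *
      (Matrix.of fun (b : SpTree E) v => if b.root = v then (1:R) else 0) b v
      = (if a = b then -(∑ c ∈ univ.filter (fun c => TStep E a c), x (a.root, c.root))
         else if TStep E a b then x (a.root, b.root) else 0) * (if b.root = v then (1:R) else 0) := by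
    intro b; rfl
  simp only [hterm]
  by_cases hv : a.root = v
  · rw [Finset.sum_eq_single a]
    · rw [if_pos rfl, if_pos hv, mul_one, sum_tstep hsimple a x, hlap, if_pos hv]
    · intro b _ hb
      by_cases hbv : b.root = v
      · have hT : ¬ TStep E a b := fun hT => hT.2.1 (hv.trans hbv.symm)
        rw [if_neg (fun h : a = b => hb h.symm), if_neg hT, zero_mul]
      · rw [if_neg hbv, mul_zero]
    · intro ha; exact absurd (Finset.mem_univ a) ha
  · rw [hlap, if_neg hv]
    by_cases hE : E a.root v
    · have hroot := rotate_root a hE hv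
      rw [Finset.sum_eq_single (rotate a v)]
      · have hne : a ≠ rotate a v := fun h => hv (by rw [h, hroot])
        rw [if_neg hne, if_pos (rotate_tstep a hE hv), hroot, if_pos rfl, mul_one, if_pos hE]
      · intro b _ hb
        by_cases hbv : b.root = v
        · have hT : ¬ TStep E a b := fun hT => hb (by rw [tstep_eq_rotate hT, hbv])
          have hab : a ≠ b := fun h => hv (h ▸ hbv)
          rw [if_neg hab, if_neg hT, zero_mul]
        · rw [if_neg hbv, mul_zero]
      · intro ha; exact absurd (Finset.mem_univ _) ha
    · rw [if_neg hE]
      apply Finset.sum_eq_zero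
      intro b _
      by_cases hbv : b.root = v
      · have hT : ¬ TStep E a b := fun hT => hE (hbv ▸ hT.1)
        have hab : a ≠ b := fun h => hv (h ▸ hbv)
        rw [if_neg hab, if_neg hT, zero_mul]
      · rw [if_neg hbv, mul_zero]

theorem schr_P (hsimple : ∀ v, ¬ E v v) (x : V × V → R) (y : V → R) :
    schrM (TStep E) (xT E x) (yT E y) * (Matrix.of fun (b : SpTree E) v => if b.root = v then (1:R) else 0)
      = (Matrix.of fun (b : SpTree E) v => if b.root = v then (1:R) else 0) * schrM E x y := by
  rw [schrM, schrM, Matrix.add_mul, Matrix.mul_add, lap_P hsimple x]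
  congr 1
  ext a v
  rw [Matrix.diagonal_mul, Matrix.mul_diagonal]
  show yT E y a * (if a.root = v then (1:R) else 0) = (if a.root = v then (1:R) else 0) * y v
  by_cases hv : a.root = v
  · rw [if_pos hv, mul_one, one_mul, yT, hv]
  · rw [if_neg hv, mul_zero, zero_mul]

end Statement11Schr

theorem det_dvd_of_semiconj {R : Type*} [CommRing R] {n m : Type*} [Fintype n] [Fintype m] [DecidableEq n] [DecidableEq m]
    (ρ : m → n) (σ : n → m) (hρσ : ∀ v, ρ (σ v) = v)
    (L : Matrix n n R) (Ll : Matrix m m R)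
    (h : Ll * (Matrix.of fun b v => if ρ b = v then (1:R) else 0)
       = (Matrix.of fun b v => if ρ b = v then (1:R) else 0) * L) :
    L.det ∣ Ll.det := by
  classical
  let C := {b : m // b ≠ σ (ρ b)}
  let e : m ≃ (n ⊕ C) :=
    { toFun := fun b => if hb : b = σ (ρ b) then Sum.inl (ρ b) else Sum.inr ⟨b, hb⟩
      invFun := Sum.elim σ Subtype.val
      left_inv := fun b => by
        dsimp only
        by_cases hb : b = σ (ρ b)
        · rw [dif_pos hb]; exact hb.symm
        · rw [dif_neg hb]; rfl
      right_inv := fun j => by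
        cases j with
        | inl v =>
          have hv : σ v = σ (ρ (σ v)) := by rw [hρσ]
          show (if hb : σ v = σ (ρ (σ v)) then Sum.inl (ρ (σ v)) else Sum.inr (⟨σ v, hb⟩ : C)) = Sum.inl v
          rw [dif_pos hv, hρσ]
        | inr c =>
          show (if hb : c.1 = σ (ρ c.1) then Sum.inl (ρ c.1) else Sum.inr (⟨c.1, hb⟩ : C)) = Sum.inr c
          rw [dif_neg c.2] }
  let Ll' : Matrix (n ⊕ C) (n ⊕ C) R := Ll.submatrix e.symm e.symm
  let U : Matrix (n ⊕ C) (n ⊕ C) R := Matrix.of fun i j =>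
    Sum.elim (fun v => if ρ (e.symm i) = v then (1:R) else 0)
             (fun c => if e.symm i = c.1 then (1:R) else 0) j
  let W : Matrix (n ⊕ C) (n ⊕ C) R := Matrix.of fun i j =>
    Sum.elim (fun v => if e.symm j = σ v then (1:R) else 0)
             (fun c => (if e.symm j = c.1 then (1:R) else 0)
                     - (if e.symm j = σ (ρ c.1) then (1:R) else 0)) i
  have hsc : ∀ (f : m → R), ∑ j : n ⊕ C, f (e.symm j) = ∑ b : m, f b :=
    fun f => Equiv.sum_comp e.symm f
  -- auxiliary: sums of delta functions
  have hnd : ∀ (c : m) (f : m → R), ∑ j : n ⊕ C, (if e.symm j = c then (1:R) else 0) * f (e.symm j) = f c := by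
    intro c f
    rw [hsc fun b => (if b = c then (1:R) else 0) * f b]
    exact sum_delta_mul c f
  have hσ_ne : ∀ (v : n) (c : C), σ v ≠ c.1 := by
    intro v c hvc
    exact c.2 (by rw [← hvc, hρσ])
  have hWU : W * U = 1 := by
    ext i j
    rw [Matrix.mul_apply]
    cases i with
    | inl v =>
      cases j with
      | inl w =>
        have : ∀ k, W (Sum.inl v) k * U k (Sum.inl w)
            = (if e.symm k = σ v then (1:R) else 0) * (if ρ (e.symm k) = w then (1:R) else 0) := by
          intro k; rfl
        simp only [this]
        rw [hnd (σ v) (fun b => if ρ b = w then (1:R) else 0), hρσ]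
        simp [Matrix.one_apply]
      | inr c =>
        have : ∀ k, W (Sum.inl v) k * U k (Sum.inr c)
            = (if e.symm k = σ v then (1:R) else 0) * (if e.symm k = c.1 then (1:R) else 0) := by
          intro k; rfl
        simp only [this]
        rw [hnd (σ v) (fun b => if b = c.1 then (1:R) else 0)]
        simp [Matrix.one_apply, hσ_ne v c]
    | inr c =>
      cases j with
      | inl w =>
        have : ∀ k, W (Sum.inr c) k * U k (Sum.inl w)
            = (if e.symm k = c.1 then (1:R) else 0) * (if ρ (e.symm k) = w then (1:R) else 0)
            - (if e.symm k = σ (ρ c.1) then (1:R) else 0) * (if ρ (e.symm k) = w then (1:R) else 0) := by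
          intro k
          have h1 : W (Sum.inr c) k = (if e.symm k = c.1 then (1:R) else 0) - (if e.symm k = σ (ρ c.1) then 1 else 0) := rfl
          have h2 : U k (Sum.inl w) = (if ρ (e.symm k) = w then (1:R) else 0) := rfl
          rw [h1, h2]; ring
        simp only [this, Finset.sum_sub_distrib]
        rw [hnd c.1 (fun b => if ρ b = w then (1:R) else 0),
            hnd (σ (ρ c.1)) (fun b => if ρ b = w then (1:R) else 0), hρσ]
        simp [Matrix.one_apply]
      | inr d =>
        have : ∀ k, W (Sum.inr c) k * U k (Sum.inr d)
            = (if e.symm k = c.1 then (1:R) else 0) * (if e.symm k = d.1 then (1:R) else 0)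
            - (if e.symm k = σ (ρ c.1) then (1:R) else 0) * (if e.symm k = d.1 then (1:R) else 0) := by
          intro k
          have h1 : W (Sum.inr c) k = (if e.symm k = c.1 then (1:R) else 0) - (if e.symm k = σ (ρ c.1) then 1 else 0) := rfl
          have h2 : U k (Sum.inr d) = (if e.symm k = d.1 then (1:R) else 0) := rfl
          rw [h1, h2]; ring
        simp only [this, Finset.sum_sub_distrib]
        rw [hnd c.1 (fun b => if b = d.1 then (1:R) else 0),
            hnd (σ (ρ c.1)) (fun b => if b = d.1 then (1:R) else 0)]
        have h2 : σ (ρ c.1) ≠ d.1 := by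
          intro hcd
          apply d.2
          rw [← hcd, hρσ]
        rw [if_neg h2, sub_zero]
        by_cases hcd : c = d
        · subst hcd; simp [Matrix.one_apply]
        · rw [if_neg (fun h' => hcd (Subtype.ext h')), Matrix.one_apply_ne (by simpa using hcd)]
  -- the product Ll' * U on inl-columns
  have hLU : ∀ i v, (Ll' * U) i (Sum.inl v) = ∑ w, (if ρ (e.symm i) = w then (1:R) else 0) * L w v := by
    intro i v
    rw [Matrix.mul_apply]
    have : ∀ k, Ll' i k * U k (Sum.inl v)
        = Ll (e.symm i) (e.symm k) * (if ρ (e.symm k) = v then (1:R) else 0) := fun k => rfl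
    simp only [this]
    rw [hsc fun b => Ll (e.symm i) b * (if ρ b = v then (1:R) else 0)]
    have h1 : (Ll * (Matrix.of fun b v => if ρ b = v then (1:R) else 0)) (e.symm i) v
        = ∑ b, Ll (e.symm i) b * (if ρ b = v then (1:R) else 0) := Matrix.mul_apply
    rw [← h1, h]
    rw [Matrix.mul_apply]
    rfl
  set M := W * Ll' * U with hM
  have hM11 : ∀ u v, M (Sum.inl u) (Sum.inl v) = L u v := by
    intro u v
    rw [hM, Matrix.mul_assoc, Matrix.mul_apply]
    have key : ∀ j, W (Sum.inl u) j * (Ll' * U) j (Sum.inl v)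
        = (if e.symm j = σ u then (1:R) else 0) * (∑ w, (if ρ (e.symm j) = w then (1:R) else 0) * L w v) := by
      intro j
      rw [hLU j v]
      rfl
    simp only [key]
    rw [hnd (σ u) (fun b => ∑ w, (if ρ b = w then (1:R) else 0) * L w v)]
    simp [hρσ, ite_mul]
  have hM21 : ∀ (c : C) v, M (Sum.inr c) (Sum.inl v) = 0 := by
    intro c v
    rw [hM, Matrix.mul_assoc, Matrix.mul_apply]
    have key : ∀ j, W (Sum.inr c) j * (Ll' * U) j (Sum.inl v)
        = (if e.symm j = c.1 then (1:R) else 0) * (∑ w, (if ρ (e.symm j) = w then (1:R) else 0) * L w v)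
        - (if e.symm j = σ (ρ c.1) then (1:R) else 0) * (∑ w, (if ρ (e.symm j) = w then (1:R) else 0) * L w v) := by
      intro j
      have h1 : W (Sum.inr c) j = (if e.symm j = c.1 then (1:R) else 0) - (if e.symm j = σ (ρ c.1) then (1:R) else 0) := rfl
      rw [hLU j v, h1, sub_mul]
    simp only [key, Finset.sum_sub_distrib]
    rw [hnd c.1 (fun b => ∑ w, (if ρ b = w then (1:R) else 0) * L w v),
        hnd (σ (ρ c.1)) (fun b => ∑ w, (if ρ b = w then (1:R) else 0) * L w v), hρσ, sub_self]
  have hblocks : M = Matrix.fromBlocks L (M.toBlocks₁₂) 0 (M.toBlocks₂₂) := by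
    ext i j
    cases i with
    | inl u =>
      cases j with
      | inl v => simpa [Matrix.fromBlocks] using hM11 u v
      | inr d => simp [Matrix.fromBlocks, Matrix.toBlocks₁₂]
    | inr c =>
      cases j with
      | inl v => simpa [Matrix.fromBlocks] using hM21 c v
      | inr d => simp [Matrix.fromBlocks, Matrix.toBlocks₂₂]
  have hdet : M.det = L.det * (M.toBlocks₂₂).det := by
    rw [hblocks]
    exact Matrix.det_fromBlocks_zero₂₁ L (M.toBlocks₁₂) (M.toBlocks₂₂)
  have hdetWU : W.det * U.det = 1 := by
    rw [← Matrix.det_mul, hWU, Matrix.det_one]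
  have hLl : Ll.det = L.det * (M.toBlocks₂₂).det := by
    have h1 : M.det = W.det * Ll'.det * U.det := by
      rw [hM, Matrix.det_mul, Matrix.det_mul]
    have h2 : Ll'.det = Ll.det := Matrix.det_submatrix_equiv_self e.symm Ll
    calc Ll.det = W.det * U.det * Ll.det := by rw [hdetWU, one_mul]
    _ = M.det := by rw [h1, h2]; ring
    _ = _ := hdet
  exact ⟨_, hLl⟩

/-- `det L` divides `det ℒ` in the polynomial ring `ℂ[x_e, y_v]`,
where `L` is the Schrödinger operator of `G` and `ℒ` the lifted Schrödinger operator
of the tree graph `𝒯G`. -/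
theorem statement11 {V : Type} [Fintype V] (E : V → V → Prop)
    (hsimple : ∀ v, ¬ E v v) (hsc : SConn E Set.univ) :
    Matrix.det (schrM E (xv (V := V)) (yv (V := V))) ∣
      Matrix.det (schrM (TStep E) (xT E (xv (V := V))) (yT E (yv (V := V)))) := by
  exact det_dvd_of_semiconj (fun a : SpTree E => a.root) (treeAt hsc)
    (fun v => rfl) _ _ (schr_P hsimple (xv (V := V)) (yv (V := V)))
end

section
/- Let n ≥ 2 and let K_n be the complete directed graph on {1,…,n}, with an edge in each direction between every pair of distinct vertices, and fix a total ordering of the vertices. Then for every subset W ⊆ {1,…,n} with 1 ≤ |W| = k ≤ n−1 and every w ∈ W, the multiplicity satisfies m(W,w) = (k−1)·(n−1)^{n−k−1}. -/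
open Classical Finset

/-!
On the complete digraph the exploration started at the root `w` examines all edges `(x, w)`
before any other edge: it keeps exactly the vertices pointing to `w` and erases all the others,
so `ψ(𝐚)` is the set of vertices `x` with `𝐚.out x = w`. Hence `m(W, w)` counts the trees rooted
at `w` in which exactly the vertices of `W \ {w}` point to `w`, and removing `w` identifies them
with the forests on the `n - 1` remaining vertices rooted at `W \ {w}`.

Forests of the complete digraph on `N` vertices with a prescribed set `U` of `r < N` roots number
`r N^(N-r-1)`. Fix a non-root `x₀`. Cutting the edge `x₀ → t` identifies the forests in which `x₀`
points to `t` with the forests rooted at `U ∪ {x₀}` in which the tree of `t` is not the tree of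
`x₀`; and swapping two roots shows that `t ∉ U ∪ {x₀}` lies in the tree of each root equally often.
Writing `F(U)` for their number, this gives `(r + 1) F(U) = N r F(U ∪ {x₀})`, and the formula
follows by induction on `N - r`.
-/

noncomputable section

theorem Nat.card_eq_sum_card_fiber {α β : Type*} [Finite α] [Fintype β] (g : α → β) :
    Nat.card α = ∑ b, Nat.card {a // g a = b} := by
  rw [← Nat.card_congr (Equiv.sigmaFiberEquiv g), Nat.card_sigma]

theorem Nat.card_subtype_add_card_subtype_not {α : Type*} [Finite α] (p : α → Prop) :
    Nat.card {a // p a} + Nat.card {a // ¬p a} = Nat.card α := by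
  rw [← Nat.card_sum, Nat.card_congr (Equiv.sumCompl p)]

theorem Finset.card_subtype_ne {V : Type*} {w : V} {W : Finset V} (hw : w ∈ W) :
    (W.subtype (· ≠ w)).card = W.card - 1 := by
  rw [Finset.card_subtype, Finset.filter_ne', Finset.card_erase_of_mem hw]

theorem Fintype.card_subtype_ne {V : Type*} [Fintype V] (w : V) :
    Fintype.card {v // v ≠ w} = Fintype.card V - 1 := by
  rw [Fintype.card_subtype_compl, Fintype.card_subtype_eq]

theorem Function.update_apply_of_notMem_insert {α β : Type*} (g : α → β) {U : Finset α}
    {x₀ : α} (t : β) : ∀ y ∉ (↑(insert x₀ U) : Set α), Function.update g x₀ t y = g y :=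
  fun _ hy => Function.update_of_ne (fun h => hy (by simp [h])) _ _

section Iterate

variable {α β : Type*}

theorem map_iterate_of_semiconj_off {f : α → α} {g : β → β} {φ : α → β} {A : Set α}
    (hφ : ∀ y ∉ A, φ (f y) = g (φ y)) {x : α} {m : ℕ} (hm : ∀ k < m, f^[k] x ∉ A) :
    φ (f^[m] x) = g^[m] (φ x) := by
  induction m with
  | zero => rfl
  | succ m ih =>
    rw [Function.iterate_succ_apply', Function.iterate_succ_apply', hφ _ (hm m m.lt_succ_self),
      ih fun k hk => hm k (hk.trans m.lt_succ_self)]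

theorem exists_iterate_mem_of_semiconj_off {f : α → α} {g : β → β} {φ : α → β} {A : Set α}
    {B : Set β} (hφ : ∀ y ∉ A, φ (f y) = g (φ y)) (hB : ∀ y, φ y ∈ B → y ∈ A) {x : α}
    (h : ∃ m, g^[m] (φ x) ∈ B) : ∃ m, f^[m] x ∈ A := by
  by_contra! hx
  obtain ⟨m, hm⟩ := h
  exact hx m (hB _ (map_iterate_of_semiconj_off hφ (fun k _ => hx k) ▸ hm))

end Iterate

namespace SpForest

variable {V : Type*} [Fintype V] {E : V → V → Prop} {U : Finset V}

section

variable (f : SpForest E U)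

theorem iterate_out_of_mem {r : V} (hr : r ∈ U) (k : ℕ) : f.out^[k] r = r :=
  Function.iterate_fixed (f.out_root r hr) k

theorem iterate_out_of_le {v : V} {m k : ℕ} (hm : f.out^[m] v ∈ U) (hk : m ≤ k) :
    f.out^[k] v = f.out^[m] v := by
  rw [← Nat.sub_add_cancel hk, Function.iterate_add_apply, f.iterate_out_of_mem hm]

theorem mem_of_iterate_out_eq_self {v : V} {p : ℕ} (hp : 0 < p) (h : f.out^[p] v = v) :
    v ∈ U := by
  obtain ⟨m, hm⟩ := f.reach v
  have hcycle : f.out^[p * m] v = v := by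
    rw [Function.iterate_mul]
    exact Function.iterate_fixed h m
  rw [← hcycle, f.iterate_out_of_le hm (Nat.le_mul_of_pos_left m hp)]
  exact hm

def rootOf (v : V) : V :=
  f.out^[Nat.find (f.reach v)] v

theorem rootOf_mem (v : V) : f.rootOf v ∈ U :=
  Nat.find_spec (f.reach v)

theorem exists_iterate_eq_rootOf (v : V) :
    ∃ N, f.out^[N] v = f.rootOf v ∧ ∀ k < N, f.out^[k] v ∉ U :=
  ⟨_, rfl, fun _ hk => Nat.find_min _ hk⟩

theorem rootOf_eq_of_iterate_mem {v : V} {m : ℕ} (h : f.out^[m] v ∈ U) :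
    f.rootOf v = f.out^[m] v := by
  rcases le_total m (Nat.find (f.reach v)) with hle | hle
  · exact f.iterate_out_of_le h hle
  · exact (f.iterate_out_of_le (f.rootOf_mem v) hle).symm

theorem rootOf_of_mem {v : V} (hv : v ∈ U) : f.rootOf v = v :=
  f.rootOf_eq_of_iterate_mem (m := 0) hv

end

def conj (σ : Equiv.Perm V) (hU : ∀ v, σ v ∈ U ↔ v ∈ U) (hE : ∀ x y, E (σ x) (σ y) ↔ E x y)
    (f : SpForest E U) : SpForest E U where
  out := σ ∘ f.out ∘ σ.symm
  out_root v hv := by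
    have : σ.symm v ∈ U := (hU _).1 (by simpa using hv)
    simp [f.out_root _ this]
  edge_mem v hv := by
    have : σ.symm v ∉ U := fun h => hv (by simpa using (hU (σ.symm v)).2 h)
    simpa using (hE _ _).2 (f.edge_mem _ this)
  reach v := by
    obtain ⟨m, hm⟩ := f.reach (σ.symm v)
    refine ⟨m, ?_⟩
    have hsc : Function.Semiconj σ f.out (σ ∘ f.out ∘ σ.symm) := fun x => by simp
    rw [← σ.apply_symm_apply v, ← hsc.iterate_right m]
    exact (hU _).2 hm

theorem rootOf_conj (σ : Equiv.Perm V) (hU : ∀ v, σ v ∈ U ↔ v ∈ U)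
    (hE : ∀ x y, E (σ x) (σ y) ↔ E x y) (f : SpForest E U) (v : V) :
    (f.conj σ hU hE).rootOf (σ v) = σ (f.rootOf v) := by
  obtain ⟨N, hN, -⟩ := f.exists_iterate_eq_rootOf v
  have hit : σ (f.out^[N] v) = (f.conj σ hU hE).out^[N] (σ v) :=
    Function.Semiconj.iterate_right (fun x => by simp [conj]) N v
  have hmem : (f.conj σ hU hE).out^[N] (σ v) ∈ U := by
    rw [← hit, hN]
    exact (hU _).2 (f.rootOf_mem v)
  rw [rootOf_eq_of_iterate_mem _ hmem, ← hit, hN]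

def conjEquiv (σ : Equiv.Perm V) (hU : ∀ v, σ v ∈ U ↔ v ∈ U)
    (hE : ∀ x y, E (σ x) (σ y) ↔ E x y) : SpForest E U ≃ SpForest E U where
  toFun := conj σ hU hE
  invFun := conj σ.symm (fun v => by simpa using (hU (σ.symm v)).symm)
    (fun x y => by simpa using (hE (σ.symm x) (σ.symm y)).symm)
  left_inv f := SpForest.ext' (by funext v; simp [conj])
  right_inv f := SpForest.ext' (by funext v; simp [conj])

def detach (f : SpForest E U) (x₀ : V) : SpForest E (insert x₀ U) where
  out := Function.update f.out x₀ x₀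
  out_root v hv := by
    rcases eq_or_ne v x₀ with rfl | hne
    · exact Function.update_self _ _ _
    · rw [Function.update_of_ne hne]
      exact f.out_root v ((Finset.mem_insert.1 hv).resolve_left hne)
  edge_mem v hv := by
    rw [Function.update_apply_of_notMem_insert _ _ v hv]
    exact f.edge_mem v fun h => hv (Finset.mem_insert_of_mem h)
  reach v :=
    exists_iterate_mem_of_semiconj_off (φ := id) (B := ↑(insert x₀ U))
      (Function.update_apply_of_notMem_insert f.out x₀) (fun _ => id)
      ((f.reach v).imp fun _ h => Finset.mem_insert_of_mem h)

/-- The new edge `x₀ → t` closes no cycle because the tree of `t` is not rooted at `x₀`. -/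
def attach {x₀ : V} (f : SpForest E (insert x₀ U)) (hx₀ : x₀ ∉ U) {t : V} (hE : E x₀ t)
    (ht : f.rootOf t ≠ x₀) : SpForest E U where
  out := Function.update f.out x₀ t
  out_root v hv := by
    rw [Function.update_of_ne (ne_of_mem_of_not_mem hv hx₀)]
    exact f.out_root v (Finset.mem_insert_of_mem hv)
  edge_mem v hv := by
    rcases eq_or_ne v x₀ with rfl | hne
    · rw [Function.update_self]
      exact hE
    · rw [Function.update_of_ne hne]
      exact f.edge_mem v fun h => hv ((Finset.mem_insert.1 h).resolve_left hne)
  reach v := by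
    have hφ := Function.update_apply_of_notMem_insert (U := U) (x₀ := x₀) f.out t
    obtain ⟨m, hm⟩ := exists_iterate_mem_of_semiconj_off (f := Function.update f.out x₀ t)
      (g := f.out) (φ := id) (B := ↑(insert x₀ U)) hφ
      (fun _ => id) (f.reach v)
    rcases Finset.mem_insert.1 hm with hm | hm
    · obtain ⟨N, hN, hpre⟩ := f.exists_iterate_eq_rootOf t
      have hroot : (Function.update f.out x₀ t)^[N] t = f.rootOf t :=
        hN ▸ (map_iterate_of_semiconj_off (φ := id) (fun y hy => (hφ y hy).symm) hpre).symm
      refine ⟨N + (m + 1), ?_⟩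
      rw [Function.iterate_add_apply, Function.iterate_succ_apply', hm, Function.update_self,
        hroot]
      exact (Finset.mem_insert.1 (f.rootOf_mem t)).resolve_left ht
    · exact ⟨m, hm⟩

theorem rootOf_detach_ne (f : SpForest E U) {x₀ t : V} (hx₀ : x₀ ∉ U) (ht : f.out x₀ = t) :
    (f.detach x₀).rootOf t ≠ x₀ := by
  intro hroot
  obtain ⟨N, hN, hpre⟩ := (f.detach x₀).exists_iterate_eq_rootOf t
  have hit : f.out^[N] t = x₀ :=
    (map_iterate_of_semiconj_off (φ := id) (Function.update_apply_of_notMem_insert f.out x₀)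
      hpre).symm.trans (hN.trans hroot)
  refine hx₀ (f.mem_of_iterate_out_eq_self (p := N + 1) (Nat.succ_pos _) ?_)
  rw [Function.iterate_succ_apply, ht, hit]

def outEquiv {x₀ t : V} (hx₀ : x₀ ∉ U) (hE : E x₀ t) :
    {f : SpForest E U // f.out x₀ = t} ≃
      {f : SpForest E (insert x₀ U) // f.rootOf t ≠ x₀} where
  toFun f := ⟨f.1.detach x₀, f.1.rootOf_detach_ne hx₀ f.2⟩
  invFun f := ⟨f.1.attach hx₀ hE f.2, by simp [attach]⟩
  left_inv f := Subtype.ext <| SpForest.ext' <| by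
    change Function.update (Function.update f.1.out x₀ x₀) x₀ t = f.1.out
    rw [Function.update_idem, Function.update_eq_iff]
    exact ⟨f.2.symm, fun _ _ => rfl⟩
  right_inv f := Subtype.ext <| SpForest.ext' <| by
    change Function.update (Function.update f.1.out x₀ t) x₀ x₀ = f.1.out
    rw [Function.update_idem, Function.update_eq_iff]
    exact ⟨(f.1.out_root x₀ (Finset.mem_insert_self _ _)).symm, fun _ _ => rfl⟩

theorem card_rootOf_eq_card_rootOf {t r₁ r₂ : V} (ht : t ∉ U) (h₁ : r₁ ∈ U) (h₂ : r₂ ∈ U) :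
    Nat.card {f : SpForest (· ≠ ·) U // f.rootOf t = r₁} =
      Nat.card {f : SpForest (· ≠ ·) U // f.rootOf t = r₂} := by
  have hU : ∀ v, Equiv.swap r₁ r₂ v ∈ U ↔ v ∈ U := fun v => by
    rcases eq_or_ne v r₁ with rfl | hv₁
    · simp [h₁, h₂]
    rcases eq_or_ne v r₂ with rfl | hv₂
    · simp [h₁, h₂]
    rw [Equiv.swap_apply_of_ne_of_ne hv₁ hv₂]
  have hE : ∀ x y, Equiv.swap r₁ r₂ x ≠ Equiv.swap r₁ r₂ y ↔ x ≠ y := fun x y =>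
    (Equiv.swap r₁ r₂).injective.ne_iff
  have hst : Equiv.swap r₁ r₂ t = t :=
    Equiv.swap_apply_of_ne_of_ne (fun h => ht (h ▸ h₁)) (fun h => ht (h ▸ h₂))
  refine Nat.card_congr ((conjEquiv _ hU hE).subtypeEquiv fun f => ?_)
  change _ ↔ (f.conj _ hU hE).rootOf t = r₂
  rw [← hst, rootOf_conj, hst, Equiv.swap_apply_eq_iff, Equiv.swap_apply_right]

theorem card_eq_card_mul_card_rootOf {t r : V} (ht : t ∉ U) (hr : r ∈ U) :
    Nat.card (SpForest (· ≠ ·) U) =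
      U.card * Nat.card {f : SpForest (· ≠ ·) U // f.rootOf t = r} := by
  rw [Nat.card_eq_sum_card_fiber fun f : SpForest (· ≠ ·) U => f.rootOf t,
    ← Finset.sum_subset (Finset.subset_univ U), Finset.sum_congr rfl fun r' hr' =>
      card_rootOf_eq_card_rootOf ht hr' hr, Finset.sum_const, smul_eq_mul]
  intro r' _ hr'
  rw [Nat.card_eq_zero]
  exact Or.inl ⟨fun f => hr' (f.2 ▸ f.1.rootOf_mem t)⟩

theorem card_univ (E : V → V → Prop) : Nat.card (SpForest E Finset.univ) = 1 := by
  refine Nat.card_eq_one_iff_unique.2 ⟨⟨fun f g => SpForest.ext' ?_⟩,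
    ⟨⟨id, fun _ _ => rfl, fun v hv => absurd (Finset.mem_univ v) hv,
      fun v => ⟨0, Finset.mem_univ v⟩⟩⟩⟩
  funext v
  rw [f.out_root v (Finset.mem_univ v), g.out_root v (Finset.mem_univ v)]

theorem card_out_eq_add_card_rootOf_eq {x₀ t : V} (hx₀ : x₀ ∉ U) (hE : E x₀ t) :
    Nat.card {f : SpForest E U // f.out x₀ = t} +
        Nat.card {f : SpForest E (insert x₀ U) // f.rootOf t = x₀} =
      Nat.card (SpForest E (insert x₀ U)) := by
  rw [Nat.card_congr (outEquiv hx₀ hE), add_comm]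
  exact Nat.card_subtype_add_card_subtype_not _

theorem card_insert_mul_sum_card_rootOf_eq {x₀ : V} (hx₀ : x₀ ∉ U) :
    (U.card + 1) * ∑ t ∈ Finset.univ.erase x₀,
        Nat.card {f : SpForest (· ≠ ·) (insert x₀ U) // f.rootOf t = x₀} =
      (Fintype.card V - (U.card + 1)) * Nat.card (SpForest (· ≠ ·) (insert x₀ U)) := by
  have hcard : (insert x₀ U).card = U.card + 1 := Finset.card_insert_of_notMem hx₀
  have hroot : ∀ t ∈ U,
      Nat.card {f : SpForest (· ≠ ·) (insert x₀ U) // f.rootOf t = x₀} = 0 := fun t ht => by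
    refine Nat.card_eq_zero.2 (Or.inl ⟨fun f => hx₀ ?_⟩)
    rw [← f.2, f.1.rootOf_of_mem (Finset.mem_insert_of_mem ht)]
    exact ht
  have hsub : (insert x₀ U)ᶜ ⊆ Finset.univ.erase x₀ := fun t ht =>
    Finset.mem_erase.2 ⟨fun h => Finset.mem_compl.1 ht (by simp [h]), Finset.mem_univ _⟩
  rw [← Finset.sum_subset hsub fun t ht ht' =>
      hroot t ((show t ≠ x₀ → t ∈ U by simpa using ht') (Finset.ne_of_mem_erase ht)),
    Finset.mul_sum, ← hcard, Finset.sum_congr rfl fun t ht =>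
      (card_eq_card_mul_card_rootOf (Finset.mem_compl.1 ht) (Finset.mem_insert_self x₀ U)).symm,
    Finset.sum_const, smul_eq_mul, Finset.card_compl]

theorem card_succ_mul_card {x₀ : V} (hx₀ : x₀ ∉ U) :
    (U.card + 1) * Nat.card (SpForest (· ≠ ·) U) =
      Fintype.card V * U.card * Nat.card (SpForest (· ≠ ·) (insert x₀ U)) := by
  set c' := Nat.card (SpForest (· ≠ ·) (insert x₀ U))
  have hsum_out : ∑ t ∈ Finset.univ.erase x₀, Nat.card {f : SpForest (· ≠ ·) U // f.out x₀ = t}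
      = Nat.card (SpForest (· ≠ ·) U) := by
    rw [Finset.sum_erase (f := fun t => Nat.card {f : SpForest (· ≠ ·) U // f.out x₀ = t}) _
        (Nat.card_eq_zero.2 (Or.inl ⟨fun f => f.1.edge_mem x₀ hx₀ f.2.symm⟩)),
      ← Nat.card_eq_sum_card_fiber]
  have hfiber : ∑ t ∈ Finset.univ.erase x₀, (Nat.card {f : SpForest (· ≠ ·) U // f.out x₀ = t} +
      Nat.card {f : SpForest (· ≠ ·) (insert x₀ U) // f.rootOf t = x₀}) =
        ∑ _t ∈ Finset.univ.erase x₀, c' :=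
    Finset.sum_congr rfl fun t ht =>
      card_out_eq_add_card_rootOf_eq hx₀ (Finset.ne_of_mem_erase ht).symm
  have htotal := congrArg ((U.card + 1) * ·) hfiber
  simp only [Finset.sum_add_distrib, mul_add, hsum_out, card_insert_mul_sum_card_rootOf_eq hx₀,
    Finset.sum_const, smul_eq_mul, Finset.card_erase_of_mem (Finset.mem_univ x₀),
    Finset.card_univ] at htotal
  have hle : U.card + 1 ≤ Fintype.card V :=
    Finset.card_insert_of_notMem hx₀ ▸ Finset.card_le_univ _
  obtain ⟨d, hd⟩ := Nat.exists_eq_add_of_le hle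
  rw [hd] at htotal ⊢
  rw [Nat.add_sub_cancel_left, show U.card + 1 + d - 1 = U.card + d by omega] at htotal
  linarith [show (U.card + 1) * ((U.card + d) * c') = (U.card + 1 + d) * U.card * c' + d * c' by
    ring]

theorem card_complete {U : Finset V} (hU : U.card < Fintype.card V) :
    Nat.card (SpForest (· ≠ ·) U) =
      U.card * Fintype.card V ^ (Fintype.card V - U.card - 1) := by
  induction hk : Fintype.card V - U.card - 1 generalizing U with
  | zero =>
    obtain ⟨x₀, -, hx₀⟩ := Finset.exists_mem_notMem_of_card_lt_card (t := Finset.univ) hU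
    have hrec := card_succ_mul_card hx₀
    rw [Finset.eq_univ_of_card (insert x₀ U) (by rw [Finset.card_insert_of_notMem hx₀]; omega),
      card_univ, show Fintype.card V = U.card + 1 by omega] at hrec
    rw [pow_zero, mul_one]
    exact Nat.eq_of_mul_eq_mul_left (by omega : 0 < U.card + 1) (by rw [hrec]; ring)
  | succ k ih =>
    obtain ⟨x₀, -, hx₀⟩ := Finset.exists_mem_notMem_of_card_lt_card (t := Finset.univ) hU
    have hcard : (insert x₀ U).card = U.card + 1 := Finset.card_insert_of_notMem hx₀
    have hrec := card_succ_mul_card hx₀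
    rw [ih (U := insert x₀ U) (by omega) (by omega), hcard] at hrec
    exact Nat.eq_of_mul_eq_mul_left (by omega : 0 < U.card + 1) (by rw [hrec]; ring)

end SpForest

/-- Invariant of the exploration of a tree of the complete digraph: the queue is `L₁ ++ L₂`,
where `L₁` consists of the initial edges `(x, root)` not yet examined, `x ∈ P`. -/
structure ExploreInv {V : Type*} [Fintype V] (a : SpTree (· ≠ · : V → V → Prop))
    (s : ExpState V) (P : Finset V) (L₁ L₂ : List (V × V)) : Prop where
  lq_eq : s.Lq = L₁ ++ L₂
  root_notMem : a.root ∉ P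
  mem_L₁ : ∀ e ∈ L₁, e.2 = a.root ∧ e.1 ∈ P
  pending_mem : ∀ x ∈ P, (x, a.root) ∈ L₁
  inTree_L₂ : ∀ e ∈ L₂, inTree a e → e.1 ∈ P
  F_source : ∀ e ∈ s.F, e.1 ∈ P ∨ a.out e.1 = a.root
  mem_A : ∀ x, x ∈ s.A ↔ a.out x = a.root ∧ x ∉ P

section Exploration

variable {V : Type*} (ord : LinearOrder V)

theorem mem_sortedTo {S : Finset (V × V)} {u : V} {e : V × V} (he : e ∈ sortedTo ord S u) :
    e ∈ S ∧ e.2 = u := by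
  simp only [sortedTo, List.mem_map, Finset.mem_sort, Finset.mem_image, Finset.mem_filter] at he
  obtain ⟨v, ⟨f, ⟨hfS, hf2⟩, rfl⟩, rfl⟩ := he
  exact ⟨by rwa [← hf2], rfl⟩

variable [Fintype V]

theorem length_sortedTo_le (S : Finset (V × V)) (u : V) :
    (sortedTo ord S u).length ≤ Fintype.card V := by
  simpa [sortedTo] using Finset.card_le_univ _

variable {E : V → V → Prop} (a : SpTree E) {s : ExpState V}

theorem expStep_of_nil (h : s.Lq = []) : expStep ord a s = s := by
  simp [expStep, h]

theorem expStep_of_inTree {e : V × V} {rest : List (V × V)} (h : s.Lq = e :: rest)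
    (he : inTree a e) :
    expStep ord a s = ⟨insert e.1 s.A, rest.filter (fun f => f.1 ≠ e.1) ++ sortedTo ord s.F e.1,
      s.F, s.Er⟩ := by
  simp [expStep, h, he]

theorem expStep_of_not_inTree {e : V × V} {rest : List (V × V)} (h : s.Lq = e :: rest)
    (he : ¬inTree a e) :
    expStep ord a s = ⟨s.A, rest.filter (fun f => f.1 ≠ e.1 ∧ f.2 ≠ e.1),
      s.F.filter (fun f => f.1 ≠ e.1 ∧ f.2 ≠ e.1), insert e.1 s.Er⟩ := by
  simp [expStep, h, he]

variable {a : SpTree (· ≠ · : V → V → Prop)}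

namespace ExploreInv

variable {P : Finset V} {L₁ L₂ : List (V × V)} {e : V × V}

theorem step_of_nil (hI : ExploreInv a s P [] (e :: L₂)) :
    ExploreInv a (expStep ord a s) P [] (L₂.filter fun f => f.1 ≠ e.1 ∧ f.2 ≠ e.1) := by
  have he : ¬inTree a e := fun he => by
    simpa using hI.pending_mem _ (hI.inTree_L₂ e List.mem_cons_self he)
  rw [expStep_of_not_inTree ord a hI.lq_eq he]
  exact
    { lq_eq := rfl
      root_notMem := hI.root_notMem
      mem_L₁ := by simp
      pending_mem := hI.pending_mem
      inTree_L₂ := fun f hf => hI.inTree_L₂ f (List.mem_cons_of_mem _ (List.mem_of_mem_filter hf))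
      F_source := fun f hf => hI.F_source f (Finset.mem_of_mem_filter _ hf)
      mem_A := hI.mem_A }

theorem step_of_child (hI : ExploreInv a s P (e :: L₁) L₂) (hc : a.out e.1 = a.root) :
    ExploreInv a (expStep ord a s) (P.erase e.1) (L₁.filter fun f => f.1 ≠ e.1)
      ((L₂.filter fun f => f.1 ≠ e.1) ++ sortedTo ord s.F e.1) := by
  obtain ⟨he2, he1⟩ := hI.mem_L₁ e List.mem_cons_self
  have hroot : e.1 ≠ a.root := fun h => hI.root_notMem (h ▸ he1)
  rw [expStep_of_inTree ord a hI.lq_eq ⟨hroot, hc.trans he2.symm⟩]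
  refine
    { lq_eq := by simp [List.filter_append]
      root_notMem := fun h => hI.root_notMem (Finset.mem_of_mem_erase h)
      mem_L₁ := fun f hf => ?_
      pending_mem := fun x hx => ?_
      inTree_L₂ := fun f hf hfT => ?_
      F_source := fun f hf => ?_
      mem_A := fun x => ?_ }
  · obtain ⟨hfL, hne⟩ := List.mem_filter.1 hf
    obtain ⟨hf2, hf1⟩ := hI.mem_L₁ f (List.mem_cons_of_mem _ hfL)
    exact ⟨hf2, Finset.mem_erase.2 ⟨by simpa using hne, hf1⟩⟩
  · obtain ⟨hxe, hxP⟩ := Finset.mem_erase.1 hx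
    refine List.mem_filter.2 ⟨?_, by simpa using hxe⟩
    exact (List.mem_cons.1 (hI.pending_mem x hxP)).resolve_left fun h => hxe (congrArg Prod.fst h)
  · rcases List.mem_append.1 hf with hf | hf
    · obtain ⟨hfL, hne⟩ := List.mem_filter.1 hf
      exact Finset.mem_erase.2 ⟨by simpa using hne, hI.inTree_L₂ f hfL hfT⟩
    · -- a tree edge into the child `e.1` starts at a non-child, hence at a pending vertex
      obtain ⟨hfF, hf2⟩ := mem_sortedTo ord hf
      have hout : a.out f.1 = e.1 := hfT.2.trans hf2
      have hf1 : f.1 ≠ e.1 := fun h => hroot (by rw [← hc, ← h, hout, h])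
      refine Finset.mem_erase.2 ⟨hf1, (hI.F_source f hfF).resolve_right fun h => ?_⟩
      exact hroot (hout.symm.trans h)
  · rcases eq_or_ne f.1 e.1 with h | h
    · exact Or.inr (h ▸ hc)
    · exact (hI.F_source f hf).imp_left fun hP => Finset.mem_erase.2 ⟨h, hP⟩
  · rw [Finset.mem_insert, hI.mem_A, Finset.mem_erase]
    rcases eq_or_ne x e.1 with rfl | hx
    · simp [hc]
    · simp [hx]

theorem step_of_not_child (hI : ExploreInv a s P (e :: L₁) L₂) (hc : a.out e.1 ≠ a.root) :
    ExploreInv a (expStep ord a s) (P.erase e.1) (L₁.filter fun f => f.1 ≠ e.1 ∧ f.2 ≠ e.1)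
      (L₂.filter fun f => f.1 ≠ e.1 ∧ f.2 ≠ e.1) := by
  obtain ⟨he2, he1⟩ := hI.mem_L₁ e List.mem_cons_self
  have hroot : e.1 ≠ a.root := fun h => hI.root_notMem (h ▸ he1)
  rw [expStep_of_not_inTree ord a hI.lq_eq fun h => hc (h.2.trans he2)]
  refine
    { lq_eq := by simp [List.filter_append]
      root_notMem := fun h => hI.root_notMem (Finset.mem_of_mem_erase h)
      mem_L₁ := fun f hf => ?_
      pending_mem := fun x hx => ?_
      inTree_L₂ := fun f hf hfT => ?_
      F_source := fun f hf => ?_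
      mem_A := fun x => ?_ }
  · obtain ⟨hfL, hne⟩ := List.mem_filter.1 hf
    obtain ⟨hf2, hf1⟩ := hI.mem_L₁ f (List.mem_cons_of_mem _ hfL)
    exact ⟨hf2, Finset.mem_erase.2 ⟨(by simpa using hne : _ ∧ _).1, hf1⟩⟩
  · obtain ⟨hxe, hxP⟩ := Finset.mem_erase.1 hx
    refine List.mem_filter.2 ⟨?_, by simpa using ⟨hxe, Ne.symm hroot⟩⟩
    exact (List.mem_cons.1 (hI.pending_mem x hxP)).resolve_left fun h => hxe (congrArg Prod.fst h)
  · obtain ⟨hfL, hne⟩ := List.mem_filter.1 hf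
    exact Finset.mem_erase.2 ⟨(by simpa using hne : _ ∧ _).1, hI.inTree_L₂ f hfL hfT⟩
  · obtain ⟨hfF, hne⟩ := Finset.mem_filter.1 hf
    exact (hI.F_source f hfF).imp_left fun hP => Finset.mem_erase.2 ⟨hne.1, hP⟩
  · rw [hI.mem_A, Finset.mem_erase]
    rcases eq_or_ne x e.1 with rfl | hx
    · simp [hc]
    · simp [hx]

theorem exists_step (hI : ExploreInv a s P L₁ L₂) (hne : s.Lq ≠ []) :
    ∃ P' L₁' L₂', ExploreInv a (expStep ord a s) P' L₁' L₂' ∧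
      (expStep ord a s).Lq.length + (Fintype.card V + 1) * P'.card <
        s.Lq.length + (Fintype.card V + 1) * P.card := by
  rcases L₁ with _ | ⟨e, L₁⟩
  · rcases L₂ with _ | ⟨e, L₂⟩
    · exact absurd hI.lq_eq hne
    · have hI' := hI.step_of_nil ord
      refine ⟨P, _, _, hI', ?_⟩
      rw [hI'.lq_eq, hI.lq_eq]
      simpa using Nat.lt_succ_of_le (List.length_filter_le _ L₂)
  · have hP := Finset.card_erase_of_mem (hI.mem_L₁ e List.mem_cons_self).2
    have hPpos := Finset.card_pos.2 ⟨_, (hI.mem_L₁ e List.mem_cons_self).2⟩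
    have hmul : (Fintype.card V + 1) * P.card =
        (Fintype.card V + 1) * (P.card - 1) + (Fintype.card V + 1) := by
      rw [← Nat.mul_succ, Nat.succ_eq_add_one, Nat.sub_add_cancel hPpos]
    by_cases hc : a.out e.1 = a.root
    · have hI' := hI.step_of_child ord hc
      refine ⟨_, _, _, hI', ?_⟩
      have h₁ := List.length_filter_le (fun f => decide (f.1 ≠ e.1)) L₁
      have h₂ := List.length_filter_le (fun f => decide (f.1 ≠ e.1)) L₂
      have h₃ := length_sortedTo_le ord s.F e.1
      rw [hI'.lq_eq, hI.lq_eq, hP]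
      simp only [List.length_append, List.length_cons]
      omega
    · have hI' := hI.step_of_not_child ord hc
      refine ⟨_, _, _, hI', ?_⟩
      have h₁ := List.length_filter_le (fun f => decide (f.1 ≠ e.1 ∧ f.2 ≠ e.1)) L₁
      have h₂ := List.length_filter_le (fun f => decide (f.1 ≠ e.1 ∧ f.2 ≠ e.1)) L₂
      rw [hI'.lq_eq, hI.lq_eq, hP]
      simp only [List.length_append, List.length_cons]
      omega

theorem iterate_nil (hI : ExploreInv a s P L₁ L₂) {k : ℕ}
    (hk : s.Lq.length + (Fintype.card V + 1) * P.card ≤ k) :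
    ∃ P' L₁' L₂', ExploreInv a ((expStep ord a)^[k] s) P' L₁' L₂' ∧
      ((expStep ord a)^[k] s).Lq = [] := by
  induction k generalizing s P L₁ L₂ with
  | zero => exact ⟨P, L₁, L₂, hI, List.eq_nil_of_length_eq_zero (by omega : s.Lq.length = 0)⟩
  | succ k ih =>
    by_cases hne : s.Lq = []
    · rw [Function.iterate_fixed (expStep_of_nil ord a hne)]
      exact ⟨P, L₁, L₂, hI, hne⟩
    · obtain ⟨P', L₁', L₂', hI', hlt⟩ := hI.exists_step ord hne
      rw [Function.iterate_succ_apply]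
      exact ih hI' (by omega)

theorem mem_A_of_nil (hI : ExploreInv a s P L₁ L₂) (hnil : s.Lq = []) (x : V) :
    x ∈ s.A ↔ a.out x = a.root := by
  have hL₁ : L₁ = [] := (List.append_eq_nil_iff.1 (hI.lq_eq.symm.trans hnil)).1
  have hP : P = ∅ := Finset.eq_empty_of_forall_notMem fun y hy => by
    simpa [hL₁] using hI.pending_mem y hy
  simp [hI.mem_A, hP]

theorem init (a : SpTree (· ≠ · : V → V → Prop)) :
    ExploreInv a (expInit ord a) (Finset.univ.erase a.root) (expInit ord a).Lq [] where
  lq_eq := (List.append_nil _).symm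
  root_notMem := by simp
  mem_L₁ e he := by
    simp only [expInit, List.mem_map, Finset.mem_sort, Finset.mem_filter] at he
    obtain ⟨u, ⟨-, hu⟩, rfl⟩ := he
    simpa using hu
  pending_mem x hx := by simpa [expInit] using hx
  inTree_L₂ := by simp
  F_source f hf := Or.inl (by simp [expInit] at hf; simpa using hf.2)
  mem_A x := by
    simp only [expInit, Finset.mem_singleton, Finset.mem_erase, Finset.mem_univ, and_true,
      not_not]
    exact ⟨fun h => ⟨h ▸ a.out_root, h⟩, fun h => h.2⟩

theorem init_measure_le (a : SpTree (· ≠ · : V → V → Prop)) :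
    (expInit ord a).Lq.length + (Fintype.card V + 1) * (Finset.univ.erase a.root).card ≤
      2 * Fintype.card (V × V) + 1 := by
  have hlen : (expInit ord a).Lq.length ≤ Fintype.card V := by
    simpa [expInit] using Finset.card_le_univ _
  rw [Finset.card_erase_of_mem (Finset.mem_univ _), Finset.card_univ, Fintype.card_prod]
  rcases Nat.eq_zero_or_pos (Fintype.card V) with h | h
  · simp_all
  · obtain ⟨m, hm⟩ := Nat.exists_eq_add_of_lt h
    rw [hm] at hlen ⊢
    simp only [Nat.add_sub_cancel]
    nlinarith

end ExploreInv

theorem mem_expPhi_complete (a : SpTree (· ≠ · : V → V → Prop)) (x : V) :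
    x ∈ expPhi ord a ↔ a.out x = a.root := by
  obtain ⟨P, L₁, L₂, hI, hnil⟩ :=
    (ExploreInv.init ord a).iterate_nil ord (ExploreInv.init_measure_le ord a)
  exact hI.mem_A_of_nil hnil x

theorem mem_expPsi_complete (a : SpTree (· ≠ · : V → V → Prop)) (x : V) :
    x ∈ expPsi ord a ↔ a.out x = a.root := by
  have hroot : a.root ∈ expPhi ord a := (mem_expPhi_complete ord a _).2 a.out_root
  simp only [expPsi, Finset.mem_filter, Finset.mem_univ, true_and, ← mem_expPhi_complete ord a]
  refine ⟨fun h => h.1, fun hx => ⟨hx, ?_, ?_⟩⟩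
  · rcases eq_or_ne a.root x with h | h
    · exact h ▸ Relation.ReflTransGen.refl
    · exact Relation.ReflTransGen.single ⟨h, hroot, hx⟩
  · rcases eq_or_ne x a.root with h | h
    · exact h ▸ Relation.ReflTransGen.refl
    · exact Relation.ReflTransGen.single ⟨h, hx, hroot⟩

end Exploration

section TreeForest

variable {V : Type*} [Fintype V] {w : V} {W : Finset V}

def SpTree.toForest (a : SpTree (· ≠ · : V → V → Prop)) (ha : a.root = w)
    (hW : ∀ x, x ∈ W ↔ a.out x = w) :
    SpForest (· ≠ · : {v // v ≠ w} → {v // v ≠ w} → Prop) (W.subtype (· ≠ w)) where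
  out x := if h : a.out x.1 = w then x else ⟨a.out x.1, h⟩
  out_root x hx := dif_pos ((hW x.1).1 (Finset.mem_subtype.1 hx))
  edge_mem x hx := by
    have h : a.out x.1 ≠ w := fun h => hx (Finset.mem_subtype.2 ((hW x.1).2 h))
    rw [dif_neg h]
    exact fun heq => a.edge_mem x.1 (ha ▸ x.2) (congrArg Subtype.val heq)
  reach x := by
    refine exists_iterate_mem_of_semiconj_off (φ := Subtype.val) (g := a.out) (B := ↑W)
      (fun y hy => ?_) (fun y hy => Finset.mem_subtype.2 hy) ?_
    · have h : a.out y.1 ≠ w := fun h => hy (Finset.mem_subtype.2 ((hW y.1).2 h))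
      simp only [dif_neg h]
    · obtain ⟨m, hm⟩ := a.reach x.1
      exact ⟨m, by rw [hm, ha]; exact (hW w).2 (ha ▸ a.out_root)⟩

def SpForest.treeOut (hw : w ∈ W)
    (f : SpForest (· ≠ · : {v // v ≠ w} → {v // v ≠ w} → Prop) (W.subtype (· ≠ w))) (v : V) : V :=
  if hv : v ∈ W then w else (f.out ⟨v, (ne_of_mem_of_not_mem hw hv).symm⟩).1

def SpForest.toTree (hw : w ∈ W)
    (f : SpForest (· ≠ · : {v // v ≠ w} → {v // v ≠ w} → Prop) (W.subtype (· ≠ w))) :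
    SpTree (· ≠ · : V → V → Prop) where
  root := w
  out := f.treeOut hw
  out_root := dif_pos hw
  edge_mem v hv := by
    rw [SpForest.treeOut]
    split_ifs with h
    · exact hv
    · set x : {v // v ≠ w} := ⟨v, (ne_of_mem_of_not_mem hw h).symm⟩
      exact fun heq => f.edge_mem x (mt Finset.mem_subtype.1 h) (Subtype.ext heq)
  reach v := by
    by_cases hv : v ∈ W
    · exact ⟨1, dif_pos hv⟩
    set x : {v // v ≠ w} := ⟨v, (ne_of_mem_of_not_mem hw hv).symm⟩
    obtain ⟨N, hN, hpre⟩ := f.exists_iterate_eq_rootOf x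
    have hit : (f.out^[N] x).1 = (f.treeOut hw)^[N] v :=
      map_iterate_of_semiconj_off (A := ↑(W.subtype (· ≠ w)))
        (fun y hy => by rw [SpForest.treeOut, dif_neg (mt Finset.mem_subtype.2 hy)]) hpre
    refine ⟨N + 1, ?_⟩
    rw [Function.iterate_succ_apply', ← hit, hN]
    exact dif_pos (Finset.mem_subtype.1 (f.rootOf_mem x))

theorem SpForest.mem_iff_toTree_out_eq (hw : w ∈ W)
    (f : SpForest (· ≠ · : {v // v ≠ w} → {v // v ≠ w} → Prop) (W.subtype (· ≠ w))) (x : V) :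
    x ∈ W ↔ (f.toTree hw).out x = w := by
  by_cases hx : x ∈ W
  · exact iff_of_true hx (dif_pos hx)
  · exact iff_of_false hx fun h => (f.out _).2 ((dif_neg hx).symm.trans h)

def treeEquivForest (hw : w ∈ W) :
    {a : SpTree (· ≠ · : V → V → Prop) // a.root = w ∧ ∀ x, x ∈ W ↔ a.out x = w} ≃
      SpForest (· ≠ · : {v // v ≠ w} → {v // v ≠ w} → Prop) (W.subtype (· ≠ w)) where
  toFun a := a.1.toForest a.2.1 a.2.2
  invFun f := ⟨f.toTree hw, rfl, f.mem_iff_toTree_out_eq hw⟩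
  left_inv a := Subtype.ext <| SpTree.ext' a.2.1.symm <| funext fun v => by
    by_cases hv : v ∈ W
    · exact (dif_pos hv).trans ((a.2.2 v).1 hv).symm
    · have h : a.1.out v ≠ w := fun h => hv ((a.2.2 v).2 h)
      simp [SpForest.toTree, SpForest.treeOut, SpTree.toForest, hv, h]
  right_inv f := SpForest.ext' <| funext fun x => by
    by_cases hx : x.1 ∈ W
    · simp [SpTree.toForest, SpForest.toTree, SpForest.treeOut, hx,
        f.out_root x (Finset.mem_subtype.2 hx)]
    · simp [SpTree.toForest, SpForest.toTree, SpForest.treeOut, hx, (f.out x).2]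

end TreeForest

theorem card_spTree_root_preimage_eq {V : Type*} [Fintype V] {W : Finset V} {w : V}
    (hw : w ∈ W) (hW : W.card < Fintype.card V) :
    Nat.card {a : SpTree (· ≠ · : V → V → Prop) // a.root = w ∧ ∀ x, x ∈ W ↔ a.out x = w} =
      (W.card - 1) * (Fintype.card V - 1) ^ (Fintype.card V - W.card - 1) := by
  have hk : 1 ≤ W.card := Finset.card_pos.2 ⟨w, hw⟩
  rw [Nat.card_congr (treeEquivForest hw), SpForest.card_complete, Finset.card_subtype_ne hw,
    Fintype.card_subtype_ne]
  · congr 2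
    omega
  · rw [Finset.card_subtype_ne hw, Fintype.card_subtype_ne]
    omega

theorem multCount_complete {V : Type*} [Fintype V] (ord : LinearOrder V) {W : Finset V} {w : V}
    (hw : w ∈ W) (hW : W.card < Fintype.card V) :
    multCount (· ≠ · : V → V → Prop) ord W w =
      (W.card - 1) * (Fintype.card V - 1) ^ (Fintype.card V - W.card - 1) := by
  have hpsi : ∀ a : SpTree (· ≠ · : V → V → Prop), a.root = w ∧ expPsi ord a = W ↔
      a.root = w ∧ ∀ x, x ∈ W ↔ a.out x = w := fun a => and_congr_right fun ha => by
    rw [Finset.ext_iff]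
    simp only [mem_expPsi_complete, ha]
    exact forall_congr' fun x => Iff.comm
  rw [multCount, Nat.card_congr (Equiv.subtypeEquivRight hpsi),
    card_spTree_root_preimage_eq hw hW]

end

theorem statement15_general (n : ℕ) (ord : LinearOrder (Fin n))
    (W : Finset (Fin n)) (hk2 : W.card ≤ n - 1)
    (w : Fin n) (hw : w ∈ W) :
    multCount (fun i j : Fin n => i ≠ j) ord W w =
      (W.card - 1) * (n - 1) ^ (n - W.card - 1) := by
  have hk : 1 ≤ W.card := Finset.card_pos.2 ⟨w, hw⟩
  simpa using multCount_complete ord hw (by rw [Fintype.card_fin]; omega)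

/-- In the complete digraph `K_n` (`n ≥ 2`), with any total
ordering of the vertices, for every subset `W` with `1 ≤ |W| = k ≤ n−1` and every
`w ∈ W`, the multiplicity satisfies `m(W, w) = (k−1)·(n−1)^{n−k−1}`. -/
theorem statement15 (n : ℕ) (hn : 2 ≤ n) (ord : LinearOrder (Fin n))
    (W : Finset (Fin n)) (hk1 : 1 ≤ W.card) (hk2 : W.card ≤ n - 1)
    (w : Fin n) (hw : w ∈ W) :
    multCount (fun i j : Fin n => i ≠ j) ord W w =
      (W.card - 1) * (n - 1) ^ (n - W.card - 1) :=
  statement15_general n ord W hk2 w hw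
end

section
/- Let k ≥ 1, let H be the hypercube digraph on {0,1}^k with edge weights y_i^j, and let m = (m_1,…,m_k) ∈ {0,1}^k. Then the generating polynomial of oriented spanning trees of H rooted at the vertex m equals (∏_{i=1}^k y_i^{m_i}) · ∏_{J ⊆ {1,…,k}, |J| ≥ 2} (Σ_{i ∈ J} (y_i^0 + y_i^1)). -/
open Classical Finset

/-- Vertices of the hypercube `{0,1}^k` (coordinate value `j ∈ {0,1}` is a `Bool`). -/
abbrev HV (k : ℕ) := Fin k → Bool

/-- The hypercube digraph: an edge between two vertices differing in exactly one
coordinate (in each direction). -/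
def HE (k : ℕ) : HV k → HV k → Prop := fun u v =>
  (univ.filter (fun i => u i ≠ v i)).card = 1

/-- The ring `ℂ[y_i^j (1 ≤ i ≤ k, j ∈ {0,1})]`. -/
abbrev HR (k : ℕ) := MvPolynomial (Fin k × Bool) ℂ

/-- The edge-weight variable `y_i^j`. -/
noncomputable def hy (k : ℕ) (i : Fin k) (j : Bool) : HR k := MvPolynomial.X (i, j)

/-- The weight of an edge of the hypercube: the edge whose target has `i`-th
coordinate equal to `j` (where `i` is the unique coordinate at which the two
endpoints differ) carries the weight `y_i^j`. -/
noncomputable def hwt (k : ℕ) : HV k × HV k → HR k := fun e =>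
  ∏ i ∈ univ.filter (fun i => e.1 i ≠ e.2 i), hy k i (e.2 i)

/-!
By the matrix-tree theorem, the generating polynomial of the spanning trees rooted at `m` is the
diagonal entry at `m` of the adjugate of the weighted Laplacian `D - A`. Expanding the
determinant by multilinearity in the rows leaves, for each map `f` sending every vertex to its
parent, the determinant of `1 - N_f` with `N_f` the 0/1 matrix of `f`: this is `1` when every
vertex reaches the root (the matrix is unitriangular for the distance to the root) and `0`
otherwise (the indicator of the vertices that never reach the root lies in its kernel).

The hypercube is the Cartesian product of `k` weighted edges, so its Laplacian is the Kronecker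
sum of the `2 × 2` edge Laplacians, whose eigenvalues are `0` and `y_i^0 + y_i^1`. Conjugating by
the tensor product of the edge eigenbases diagonalizes it, with eigenvalue
`∑_{i ∈ J} (y_i^0 + y_i^1)` on the eigenvector indexed by `J ⊆ {1, …, k}`. The adjugate of
this diagonal matrix is supported on `J = ∅`, so the entry at `m` is the product of the
eigenvalues with `J ≠ ∅` times `∏ᵢ y_i^{m_i} / (y_i^0 + y_i^1)`, and the singletons `J` cancel
the denominators.
-/

open Matrix

section MatrixTree

variable {V R : Type*} [DecidableEq V] [CommRing R]

def outMatrix (r : V) (f : V → V) : Matrix V V R :=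
  Matrix.of fun i j => if i = r then 0 else if f i = j then 1 else 0

theorem one_sub_outMatrix_row (r : V) (f : V → V) (i : V) :
    (1 - outMatrix r f : Matrix V V R) i = (1 - outMatrix r (fun _ => f i) : Matrix V V R) i := by
  ext j
  simp [outMatrix]

theorem find_iterate_apply_lt {r : V} {f : V → V} (h : ∀ v, ∃ n, f^[n] v = r) {i : V}
    (hi : i ≠ r) : Nat.find (h (f i)) < Nat.find (h i) := by
  obtain ⟨n, hn⟩ : ∃ n, Nat.find (h i) = n + 1 := Nat.exists_eq_add_one.mpr <|
    Nat.pos_of_ne_zero fun h0 => hi (by simpa [h0] using Nat.find_spec (h i))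
  have hspec := Nat.find_spec (h i)
  rw [hn, Function.iterate_succ_apply] at hspec
  rw [hn]
  exact Nat.lt_succ_of_le (Nat.find_min' _ hspec)

variable [Fintype V]

def laplacian (A : Matrix V V R) : Matrix V V R :=
  diagonal (fun v => ∑ u, A v u) - A

theorem laplacian_apply (A : Matrix V V R) (v w : V) :
    laplacian A v w = (if v = w then ∑ u, A v u else 0) - A v w := by
  rw [laplacian, Matrix.sub_apply, diagonal_apply]

theorem outMatrix_mulVec (r : V) (f : V → V) (x : V → R) (i : V) :
    (outMatrix r f *ᵥ x) i = if i = r then 0 else x (f i) := by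
  by_cases hi : i = r <;> simp [outMatrix, mulVec, dotProduct, hi]

theorem det_one_sub_outMatrix_of_reaches {r : V} {f : V → V} (h : ∀ v, ∃ n, f^[n] v = r) :
    (1 - outMatrix r f : Matrix V V R).det = 1 := by
  set depth : V → ℕᵒᵈ := fun v => OrderDual.toDual (Nat.find (h v))
  have hout : ∀ i j, depth j ≤ depth i → outMatrix r f i j = (0 : R) := by
    intro i j hij
    by_cases hi : i = r
    · simp [outMatrix, hi]
    · rw [outMatrix, of_apply, if_neg hi, if_neg]
      rintro rfl
      exact (find_iterate_apply_lt h hi).not_ge hij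
  have htri : (1 - outMatrix r f : Matrix V V R).BlockTriangular depth := fun i j hij => by
    rw [Matrix.sub_apply, one_apply_ne (fun e => hij.ne (by rw [e])), hout i j hij.le, sub_zero]
  rw [htri.det]
  refine Finset.prod_eq_one fun a _ => ?_
  have hblock : (1 - outMatrix r f : Matrix V V R).toSquareBlock depth a = 1 := by
    ext ⟨i, hi⟩ ⟨j, hj⟩
    simp [toSquareBlock_def, hout i j (hj.trans hi.symm).le, one_apply]
  rw [hblock, det_one]

theorem det_one_sub_outMatrix_of_not_reaches {r : V} {f : V → V}
    (h : ¬ ∀ v, ∃ n, f^[n] v = r) : (1 - outMatrix r f : Matrix V V R).det = 0 := by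
  set C : V → Prop := fun v => ∀ n, f^[n] v ≠ r
  have hC : ∀ i, i ≠ r → (C (f i) ↔ C i) := by
    intro i hi
    refine ⟨fun hfi n => ?_, fun hCi n => by
      simpa only [Function.iterate_succ_apply] using hCi (n + 1)⟩
    cases n with
    | zero => exact hi
    | succ n => rw [Function.iterate_succ_apply]; exact hfi n
  obtain ⟨v, hv⟩ : ∃ v, C v := by simpa [C] using h
  refine det_eq_zero_of_mulVec_eq_zero_of_mem_nonZeroDivisors
    (v := fun u => if C u then 1 else 0) ?_ (i := v) (by simp [hv])
  ext i
  rw [Matrix.sub_mulVec, one_mulVec, Pi.sub_apply, outMatrix_mulVec, Pi.zero_apply]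
  by_cases hi : i = r
  · have hr : ¬ C r := fun hr => hr 0 rfl
    simp [hi, hr]
  · simp [hi, hC i hi]

theorem adjugate_laplacian_apply_self (A : Matrix V V R) (r : V) :
    (laplacian A).adjugate r r =
      ∑ f ∈ univ.filter (fun f : V → V => f r = r ∧ ∀ v, ∃ n, f^[n] v = r),
        ∏ v ∈ univ.erase r, A v (f v) := by
  -- Row `i ≠ r` of the Laplacian is `∑ u, A i u • (eᵢ - e_u)`; row `r` of the matrix whose
  -- determinant is the adjugate entry is `e_r`, which is the row `r` of every `1 - outMatrix r f`.
  set C : V → V → R := fun i u => if i = r then (if u = r then 1 else 0) else A i u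
  have hrows : (laplacian A).updateRow r (Pi.single r 1) =
      fun i => ∑ u, C i u • (1 - outMatrix r (fun _ => u) : Matrix V V R) i := by
    ext i j
    rw [Finset.sum_apply]
    simp only [Pi.smul_apply, smul_eq_mul, Matrix.sub_apply, outMatrix, of_apply, C]
    by_cases hi : i = r
    · subst hi
      simp [one_apply, Pi.single_apply, eq_comm]
    · simp [hi, laplacian, diagonal_apply, one_apply, mul_sub, Finset.sum_sub_distrib]
  have hC : ∀ f : V → V,
      ∏ i, C i (f i) = if f r = r then ∏ v ∈ univ.erase r, A v (f v) else 0 := by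
    intro f
    rw [← Finset.mul_prod_erase univ _ (mem_univ r)]
    have : ∏ v ∈ univ.erase r, C v (f v) = ∏ v ∈ univ.erase r, A v (f v) :=
      Finset.prod_congr rfl fun v hv => if_neg (Finset.ne_of_mem_erase hv)
    by_cases hf : f r = r <;> simp [C, hf, this]
  calc (laplacian A).adjugate r r
      = detRowAlternating
          fun i => ∑ u, C i u • (1 - outMatrix r (fun _ => u) : Matrix V V R) i := by
        rw [adjugate_apply, hrows]
        rfl
    _ = ∑ f : V → V, (∏ i, C i (f i)) • (1 - outMatrix r f : Matrix V V R).det := by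
        refine (detRowAlternating.toMultilinearMap.map_sum _).trans
          (Finset.sum_congr rfl fun f _ => ?_)
        rw [AlternatingMap.coe_multilinearMap, AlternatingMap.map_smul_univ]
        simp_rw [← one_sub_outMatrix_row]
        rfl
    _ = _ := by
        rw [Finset.sum_filter]
        refine Finset.sum_congr rfl fun f _ => ?_
        by_cases hreach : ∀ v, ∃ n, f^[n] v = r
        · rw [det_one_sub_outMatrix_of_reaches hreach, hC]
          by_cases hf : f r = r <;> simp [hf, hreach]
        · rw [det_one_sub_outMatrix_of_not_reaches hreach]
          simp [hreach]

theorem treeWt_eq_prod_adjM {E : V → V → Prop} (x : V × V → R) (a : SpTree E) :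
    treeWt x a = ∏ v ∈ univ.erase a.root, adjM E x v (a.out v) := by
  rw [treeWt]
  refine Finset.prod_congr (by ext; simp) fun v hv => ?_
  rw [adjM, of_apply, if_pos (a.edge_mem v (Finset.ne_of_mem_erase hv))]

theorem sum_treeWt_eq_adjugate_laplacian (E : V → V → Prop) (x : V × V → R) (r : V) :
    ∑ a ∈ univ.filter (fun a : SpTree E => a.root = r), treeWt x a =
      (laplacian (adjM E x)).adjugate r r := by
  rw [adjugate_laplacian_apply_self]
  refine Finset.sum_bij_ne_zero (fun a _ _ => a.out) ?_ ?_ ?_ ?_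
  · intro a ha _
    obtain rfl : a.root = r := (Finset.mem_filter.mp ha).2
    simpa using ⟨a.out_root, a.reach⟩
  · intro a ha _ b hb _ hab
    exact SpTree.ext' ((Finset.mem_filter.mp ha).2.trans (Finset.mem_filter.mp hb).2.symm) hab
  · intro f hf hne
    obtain ⟨hfr, hreach⟩ := (Finset.mem_filter.mp hf).2
    have hE : ∀ v, v ≠ r → E v (f v) := fun v hv => by
      by_contra hE
      exact hne (Finset.prod_eq_zero (Finset.mem_erase.mpr ⟨hv, mem_univ v⟩)
        (by rw [adjM, of_apply, if_neg hE]))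
    exact ⟨⟨r, f, hfr, hE, hreach⟩, by simp, by rwa [treeWt_eq_prod_adjM], rfl⟩
  · intro a ha _
    rw [treeWt_eq_prod_adjM, (Finset.mem_filter.mp ha).2]

end MatrixTree

section Conjugation

variable {n R : Type*} [Fintype n] [DecidableEq n] [CommRing R]

theorem adjugate_eq_det_smul_of_mul_eq_one {P Q : Matrix n n R} (h : P * Q = 1) :
    P.adjugate = P.det • Q :=
  calc P.adjugate = P.adjugate * P * Q := by rw [Matrix.mul_assoc, h, Matrix.mul_one]
    _ = P.det • Q := by rw [adjugate_mul, smul_mul, Matrix.one_mul]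

theorem adjugate_mul_mul_of_mul_eq_one {P Q : Matrix n n R} (h : P * Q = 1) (D : Matrix n n R) :
    (P * D * Q).adjugate = P * D.adjugate * Q := by
  have hdet : P.det * Q.det = 1 := by rw [← det_mul, h, det_one]
  rw [adjugate_mul_distrib, adjugate_mul_distrib, adjugate_eq_det_smul_of_mul_eq_one h,
    adjugate_eq_det_smul_of_mul_eq_one (mul_eq_one_comm.mp h)]
  simp only [Matrix.smul_mul, Matrix.mul_smul, smul_smul, hdet, one_smul, Matrix.mul_assoc]

end Conjugation

section KroneckerPi

variable {ι α R : Type*} [Fintype ι] [CommRing R]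

def kroneckerPi (M : ι → Matrix α α R) : Matrix (ι → α) (ι → α) R :=
  Matrix.of fun v w => ∏ i, M i (v i) (w i)

theorem kroneckerPi_mul [DecidableEq ι] [Fintype α] (M N : ι → Matrix α α R) :
    kroneckerPi M * kroneckerPi N = kroneckerPi (M * N) := by
  ext v w
  simp only [kroneckerPi, mul_apply, of_apply, Pi.mul_apply, Fintype.prod_sum,
    Finset.prod_mul_distrib]

variable [DecidableEq α]

theorem kroneckerPi_one : kroneckerPi (1 : ι → Matrix α α R) = 1 := by
  ext v w
  simp only [kroneckerPi, of_apply, Pi.one_apply, one_apply, Fintype.prod_boole, funext_iff]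

variable [DecidableEq ι]

def kroneckerSum (M : ι → Matrix α α R) : Matrix (ι → α) (ι → α) R :=
  ∑ i, kroneckerPi (Pi.mulSingle i (M i))

theorem kroneckerPi_mulSingle_apply (i : ι) (X : Matrix α α R) (v w : ι → α) :
    kroneckerPi (Pi.mulSingle i X) v w = if ∀ j ≠ i, v j = w j then X (v i) (w i) else 0 := by
  rw [kroneckerPi, of_apply, ← Finset.mul_prod_erase univ _ (mem_univ i), Pi.mulSingle_eq_same]
  have : ∏ j ∈ univ.erase i, (Pi.mulSingle i X : ι → Matrix α α R) j (v j) (w j) =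
      ∏ j ∈ univ.erase i, if v j = w j then (1 : R) else 0 :=
    Finset.prod_congr rfl fun j hj => by
      rw [Pi.mulSingle_eq_of_ne (Finset.ne_of_mem_erase hj), one_apply]
  rw [this, Finset.prod_boole]
  simp only [Finset.mem_erase, mem_univ, and_true, mul_ite, mul_one, mul_zero]

theorem kroneckerSum_apply (M : ι → Matrix α α R) (v w : ι → α) :
    kroneckerSum M v w = ∑ i, if ∀ j ≠ i, v j = w j then M i (v i) (w i) else 0 := by
  simp only [kroneckerSum, Matrix.sum_apply, kroneckerPi_mulSingle_apply]

theorem ite_forall_ne_ite_eq (i : ι) (v w : ι → α) (a : R) :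
    (if ∀ j ≠ i, v j = w j then (if v i = w i then a else 0) else 0) =
      if v = w then a else 0 := by
  by_cases hvw : v = w
  · simp [hvw]
  · have : ¬ ((∀ j ≠ i, v j = w j) ∧ v i = w i) := fun h =>
      hvw (funext fun j => if hj : j = i then hj ▸ h.2 else h.1 j hj)
    rw [if_neg hvw, ite_eq_right_iff]
    exact fun h => if_neg fun h' => this ⟨h, h'⟩

theorem kroneckerSum_diagonal (d : ι → α → R) :
    kroneckerSum (fun i => diagonal (d i)) = diagonal (fun v => ∑ i, d i (v i)) := by
  ext v w
  simp only [kroneckerSum_apply, diagonal_apply, ite_forall_ne_ite_eq, Finset.sum_ite_irrel,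
    Finset.sum_const_zero]

variable [Fintype α]

theorem sum_kroneckerPi_mulSingle_apply (i : ι) (X : Matrix α α R) (v : ι → α) :
    ∑ w, kroneckerPi (Pi.mulSingle i X) v w = ∑ b, X (v i) b := by
  simp only [kroneckerPi, of_apply, ← Fintype.prod_sum]
  rw [Fintype.prod_eq_single i fun j hj => by simp [Pi.mulSingle_eq_of_ne hj, one_apply],
    Pi.mulSingle_eq_same]

theorem laplacian_kroneckerSum (M : ι → Matrix α α R) :
    laplacian (kroneckerSum M) = kroneckerSum (fun i => laplacian (M i)) := by
  ext v w
  have hrow : ∑ u, kroneckerSum M v u = ∑ i, ∑ b, M i (v i) b := by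
    simp only [kroneckerSum, Matrix.sum_apply]
    rw [Finset.sum_comm]
    simp only [sum_kroneckerPi_mulSingle_apply]
  have hterm : ∀ i, (if ∀ j ≠ i, v j = w j then laplacian (M i) (v i) (w i) else 0) =
      (if v = w then ∑ b, M i (v i) b else 0) -
        if ∀ j ≠ i, v j = w j then M i (v i) (w i) else 0 := by
    intro i
    rw [← ite_forall_ne_ite_eq i]
    split_ifs <;> simp [laplacian_apply, *]
  rw [laplacian_apply, hrow, kroneckerSum_apply, kroneckerSum_apply]
  simp only [hterm, Finset.sum_sub_distrib, Finset.sum_ite_irrel, Finset.sum_const_zero]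

theorem kroneckerPi_mul_kroneckerSum_mul {P Q : ι → Matrix α α R} (hPQ : ∀ i, P i * Q i = 1)
    (X : ι → Matrix α α R) :
    kroneckerPi P * kroneckerSum X * kroneckerPi Q = kroneckerSum (fun i => P i * X i * Q i) := by
  simp only [kroneckerSum, Matrix.mul_sum, Matrix.sum_mul, kroneckerPi_mul]
  refine Finset.sum_congr rfl fun i _ => congrArg kroneckerPi (funext fun j => ?_)
  by_cases hj : j = i
  · subst hj
    simp
  · simp [Pi.mulSingle_eq_of_ne hj, hPQ]

end KroneckerPi

theorem prod_erase_empty_eq_mul {ι M : Type*} [Fintype ι] [DecidableEq ι] [CommMonoid M]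
    (g : Finset ι → M) :
    ∏ J ∈ univ.erase ∅, g J =
      (∏ i, g {i}) * ∏ J ∈ univ.filter (fun J : Finset ι => 2 ≤ J.card), g J := by
  have hsplit : univ.erase ∅ =
      univ.powersetCard 1 ∪ univ.filter (fun J : Finset ι => 2 ≤ J.card) := by
    ext J
    simp only [Finset.mem_erase, mem_univ, and_true, Finset.mem_union, Finset.mem_powersetCard,
      Finset.subset_univ, true_and, mem_filter, Ne, ← Finset.card_eq_zero]
    omega
  rw [hsplit, Finset.prod_union, Finset.powersetCard_one, Finset.prod_map]
  · rfl
  · rw [Finset.disjoint_left]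
    intro J h1 h2
    simp at h1 h2
    omega

section Hypercube

variable {k : ℕ}

section CommRing

variable {R : Type*} [CommRing R]

def cubeWeight (y : Fin k → Bool → R) : HV k × HV k → R := fun e =>
  ∏ i ∈ univ.filter (fun i => e.1 i ≠ e.2 i), y i (e.2 i)

def edgeAdj (y : Bool → R) : Matrix Bool Bool R :=
  Matrix.of fun b c => if b = c then 0 else y c

theorem adjM_HE_cubeWeight (y : Fin k → Bool → R) :
    adjM (HE k) (cubeWeight y) = kroneckerSum (fun i => edgeAdj (y i)) := by
  ext v w
  set D := univ.filter (fun i => v i ≠ w i)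
  rw [kroneckerSum_apply]
  trans ∑ i, if D = {i} then y i (w i) else 0
  · rw [adjM, of_apply]
    by_cases hD : D.card = 1
    · obtain ⟨i0, hi0⟩ := Finset.card_eq_one.mp hD
      rw [if_pos (show HE k v w from hD), cubeWeight]
      show ∏ i ∈ D, y i (w i) = _
      simp [hi0, Finset.singleton_inj]
    · rw [if_neg (show ¬ HE k v w from hD)]
      exact (Finset.sum_eq_zero fun i _ => if_neg fun h => hD (by rw [h, card_singleton])).symm
  refine Finset.sum_congr rfl fun i _ => ?_
  by_cases hvi : v i = w i
  · have hiD : D ≠ {i} := by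
      intro h
      have : i ∈ D := h ▸ mem_singleton_self i
      simp [D, hvi] at this
    simp [edgeAdj, hvi, hiD]
  · have : D = {i} ↔ ∀ j ≠ i, v j = w j := by
      simp only [Finset.eq_singleton_iff_unique_mem, D, mem_filter, mem_univ, true_and]
      exact ⟨fun h j hji => by_contra fun hj => hji (h.2 j hj),
        fun h => ⟨hvi, fun j hj => by_contra fun hji => hj (h j hji)⟩⟩
    rw [edgeAdj, of_apply, if_neg hvi]
    by_cases hD : D = {i}
    · rw [if_pos hD, if_pos (this.mp hD)]
    · rw [if_neg hD, if_neg (mt this.mpr hD)]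

def cubeEigenvalue (y : Fin k → Bool → R) (v : HV k) : R :=
  ∑ i, if v i then y i false + y i true else 0

theorem cubeEigenvalue_false (y : Fin k → Bool → R) :
    cubeEigenvalue y (fun _ => false) = 0 := by
  simp [cubeEigenvalue]

theorem prod_cubeEigenvalue_erase (y : Fin k → Bool → R) :
    ∏ v ∈ univ.erase (fun _ => false), cubeEigenvalue y v =
      ∏ J ∈ univ.erase (∅ : Finset (Fin k)), ∑ i ∈ J, (y i false + y i true) := by
  refine Finset.prod_nbij' (fun v => univ.filter (fun i => v i)) (fun J i => decide (i ∈ J))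
    ?_ ?_ ?_ ?_ ?_
  · intro v hv
    rw [Finset.mem_erase] at hv ⊢
    refine ⟨fun h => hv.1 (funext fun i => ?_), mem_univ _⟩
    simpa using Finset.filter_eq_empty_iff.mp h (mem_univ i)
  · intro J hJ
    rw [Finset.mem_erase] at hJ ⊢
    refine ⟨fun h => hJ.1 (Finset.eq_empty_of_forall_notMem fun i hi => ?_), mem_univ _⟩
    simpa [hi] using congrFun h i
  · intro v _
    funext i
    simp
  · intro J _
    ext i
    simp
  · intro v _
    rw [cubeEigenvalue, Finset.sum_filter]

end CommRing

variable {K : Type*} [Field K]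

-- The columns are eigenvectors of `laplacian (edgeAdj y)` for the eigenvalues `0` and
-- `y false + y true`.
def edgeEigenbasis (y : Bool → K) : Matrix Bool Bool K :=
  Matrix.of fun b c => if c then (if b then -y false else y true) else 1

def edgeEigenbasisInv (y : Bool → K) : Matrix Bool Bool K :=
  Matrix.of fun c b => (if c then (if b then -1 else 1) else y b) / (y false + y true)

theorem edgeEigenbasis_mul_inv {y : Bool → K} (hy : y false + y true ≠ 0) :
    edgeEigenbasis y * edgeEigenbasisInv y = 1 := by
  ext b c
  cases b <;> cases c <;>
    simp [mul_apply, edgeEigenbasis, edgeEigenbasisInv] <;>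
    field_simp <;> ring

theorem laplacian_edgeAdj {y : Bool → K} (hy : y false + y true ≠ 0) :
    laplacian (edgeAdj y) = edgeEigenbasis y *
      diagonal (fun c : Bool => if c then y false + y true else 0) * edgeEigenbasisInv y := by
  ext b c
  cases b <;> cases c <;>
    simp [mul_apply, laplacian_apply, edgeAdj, edgeEigenbasis, edgeEigenbasisInv] <;>
    field_simp

theorem laplacian_adjM_HE_cubeWeight {y : Fin k → Bool → K}
    (hy : ∀ i, y i false + y i true ≠ 0) :
    laplacian (adjM (HE k) (cubeWeight y)) =
      kroneckerPi (fun i => edgeEigenbasis (y i)) * diagonal (cubeEigenvalue y) *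
        kroneckerPi (fun i => edgeEigenbasisInv (y i)) := by
  rw [adjM_HE_cubeWeight, laplacian_kroneckerSum]
  simp only [laplacian_edgeAdj (hy _)]
  rw [← kroneckerPi_mul_kroneckerSum_mul (fun i => edgeEigenbasis_mul_inv (hy i)),
    kroneckerSum_diagonal]
  rfl

theorem adjugate_laplacian_adjM_HE_apply_self {y : Fin k → Bool → K}
    (hy : ∀ i, y i false + y i true ≠ 0) (m : HV k) :
    (laplacian (adjM (HE k) (cubeWeight y))).adjugate m m =
      (∏ v ∈ univ.erase (fun _ => false), cubeEigenvalue y v) *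
        ∏ i, y i (m i) / (y i false + y i true) := by
  have hPQ : kroneckerPi (fun i => edgeEigenbasis (y i)) *
      kroneckerPi (fun i => edgeEigenbasisInv (y i)) = 1 := by
    rw [kroneckerPi_mul, ← kroneckerPi_one]
    exact congrArg kroneckerPi (funext fun i => edgeEigenbasis_mul_inv (hy i))
  rw [laplacian_adjM_HE_cubeWeight hy, adjugate_mul_mul_of_mul_eq_one hPQ, adjugate_diagonal,
    mul_apply, Finset.sum_eq_single (fun _ => false)]
  · simp [mul_diagonal, kroneckerPi, edgeEigenbasis, edgeEigenbasisInv]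
  · intro v _ hv
    rw [mul_diagonal, Finset.prod_eq_zero (Finset.mem_erase.mpr ⟨Ne.symm hv, mem_univ _⟩)
      (cubeEigenvalue_false y), mul_zero, zero_mul]
  · exact fun h => absurd (mem_univ _) h

theorem sum_treeWt_cubeWeight {y : Fin k → Bool → K} (hy : ∀ i, y i false + y i true ≠ 0)
    (m : HV k) :
    ∑ a ∈ univ.filter (fun a : SpTree (HE k) => a.root = m), treeWt (cubeWeight y) a =
      (∏ i, y i (m i)) * ∏ J ∈ univ.filter (fun J : Finset (Fin k) => 2 ≤ J.card),
        ∑ i ∈ J, (y i false + y i true) := by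
  rw [sum_treeWt_eq_adjugate_laplacian, adjugate_laplacian_adjM_HE_apply_self hy,
    prod_cubeEigenvalue_erase, prod_erase_empty_eq_mul, Finset.prod_div_distrib]
  simp only [Finset.sum_singleton]
  have : ∏ i, (y i false + y i true) ≠ 0 := Finset.prod_ne_zero_iff.mpr fun i _ => hy i
  field_simp

end Hypercube

theorem statement18_general (k : ℕ) (m : HV k) :
    ∑ a ∈ univ.filter (fun a : SpTree (HE k) => a.root = m), treeWt (hwt k) a =
      (∏ i : Fin k, hy k i (m i)) *
        ∏ J ∈ univ.filter (fun J : Finset (Fin k) => 2 ≤ J.card),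
          (∑ i ∈ J, (hy k i false + hy k i true)) := by
  let φ := algebraMap (HR k) (FractionRing (HR k))
  have hs : ∀ i, φ (hy k i false) + φ (hy k i true) ≠ 0 := by
    intro i h
    rw [← map_add, map_eq_zero_iff φ (IsFractionRing.injective _ _)] at h
    simpa [hy] using congrArg (MvPolynomial.eval fun _ => (1 : ℂ)) h
  have hφ : ∀ a : SpTree (HE k),
      φ (treeWt (hwt k) a) = treeWt (cubeWeight fun i b => φ (hy k i b)) a := by
    intro a
    simp only [treeWt, hwt, cubeWeight, map_prod]
  apply IsFractionRing.injective (HR k) (FractionRing (HR k))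
  rw [map_sum, Finset.sum_congr rfl fun a _ => hφ a, sum_treeWt_cubeWeight hs m]
  simp only [map_mul, map_prod, map_sum, map_add]
  rfl

/-- The generating polynomial of oriented spanning trees of the
hypercube `{0,1}^k` rooted at the vertex `m` equals
`(∏_i y_i^{m_i}) · ∏_{J ⊆ {1,…,k}, |J| ≥ 2} (Σ_{i ∈ J} (y_i^0 + y_i^1))`. -/
theorem statement18 (k : ℕ) (hk : 1 ≤ k) (m : HV k) :
    ∑ a ∈ univ.filter (fun a : SpTree (HE k) => a.root = m), treeWt (hwt k) a =
      (∏ i : Fin k, hy k i (m i)) *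
        ∏ J ∈ univ.filter (fun J : Finset (Fin k) => 2 ≤ J.card),
          (∑ i ∈ J, (hy k i false + hy k i true)) :=
  statement18_general k m
end
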